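/- arXiv:2409.14068 — 9 statements merged into one kernel-verified Lean document; each statement's English description precedes it below -/
import Mathlib

section
/- Let H be a complex Hilbert space, let A and B be positive bounded operators on H, and let (B_n) be a sequence of positive bounded operators on H such that B_0 = B and, for every n, the operator B_n − B_{n+1} is positive and satisfies ⟪(B_n − B_{n+1})x, x⟫ = inf{ ⟪B_n(x−y), x−y⟫ + ⟪A y, y⟫ : y ∈ H } for all x ∈ H (i.e., B_{n+1} = B_n − (B_n : A)). Then: (i) the sequence (B_n) is nonincreasing in the operator order; (ii) (B_n) converges in the strong operator topology to a positive bounded operator B_s; (iii) B_s and A are mutually singular; (iv) B − B_s is absolutely continuous with respect to A. -/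
set_option linter.unusedSectionVars false
set_option maxHeartbeats 1000000


open ContinuousLinearMap Filter Topology

variable {H : Type*} [NormedAddCommGroup H] [InnerProductSpace ℂ H] [CompleteSpace H]

/-- `B` is absolutely continuous with respect to `A`: whenever `⟪A xₙ, xₙ⟫ → 0` and
`⟪B (xₙ - xₘ), xₙ - xₘ⟫ → 0` as `n, m → ∞`, we have `⟪B xₙ, xₙ⟫ → 0`. -/
def AbsCont (B A : H →L[ℂ] H) : Prop :=
  ∀ x : ℕ → H,
    Tendsto (fun n => (inner ℂ (A (x n)) (x n) : ℂ).re) atTop (𝓝 0) →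
    Tendsto (fun p : ℕ × ℕ => (inner ℂ (B (x p.1 - x p.2)) (x p.1 - x p.2) : ℂ).re)
      (atTop ×ˢ atTop) (𝓝 0) →
    Tendsto (fun n => (inner ℂ (B (x n)) (x n) : ℂ).re) atTop (𝓝 0)

/-- `A` and `B` are mutually singular: the only positive operator dominated by both is `0`.
(Here `≤` is the Loewner order: `C ≤ A ↔ (A - C).IsPositive`.) -/
def MutuallySingular (A B : H →L[ℂ] H) : Prop :=
  ∀ C : H →L[ℂ] H, C.IsPositive → C ≤ A → C ≤ B → C = 0

noncomputable def Qf (T : H →L[ℂ] H) (x : H) : ℝ := (inner ℂ (T x) x : ℂ).re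
noncomputable def bf (T : H →L[ℂ] H) (x y : H) : ℝ := (inner ℂ (T x) y : ℂ).re

lemma bf_sub_op (T S : H →L[ℂ] H) (x y : H) : bf (T - S) x y = bf T x y - bf S x y := by
  simp [bf, inner_sub_left]

lemma bf_add_op (T S : H →L[ℂ] H) (x y : H) : bf (T + S) x y = bf T x y + bf S x y := by
  simp [bf, inner_add_left]

lemma Qf_sub_op (T S : H →L[ℂ] H) (x : H) : Qf (T - S) x = Qf T x - Qf S x := by
  simp [Qf, inner_sub_left]

lemma bf_add_left (T : H →L[ℂ] H) (u v y : H) : bf T (u + v) y = bf T u y + bf T v y := by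
  simp [bf, inner_add_left]

lemma bf_add_right (T : H →L[ℂ] H) (x u v : H) : bf T x (u + v) = bf T x u + bf T x v := by
  simp [bf, inner_add_right]

lemma bf_smul_left (T : H →L[ℂ] H) (t : ℝ) (u y : H) : bf T (t • u) y = t * bf T u y := by
  rw [bf, map_smul_of_tower, RCLike.real_smul_eq_coe_smul (K := ℂ), inner_smul_left]
  simp [bf, Complex.conj_ofReal]

lemma bf_smul_right (T : H →L[ℂ] H) (t : ℝ) (x v : H) : bf T x (t • v) = t * bf T x v := by
  rw [bf, RCLike.real_smul_eq_coe_smul (K := ℂ), inner_smul_right]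
  simp [bf]

lemma Qf_expand {T : H →L[ℂ] H} (hT : IsSelfAdjoint T) (u v : H) :
    Qf T (u + v) = Qf T u + Qf T v + 2 * bf T u v := by
  have hs : bf T v u = bf T u v := by
    have h := hT.isSymmetric v u
    simp only [ContinuousLinearMap.coe_coe] at h
    rw [bf, bf, h, ← inner_conj_symm (T u) v, Complex.conj_re]
  have : Qf T (u + v) = bf T (u+v) (u+v) := rfl
  rw [this, bf_add_left, bf_add_right, bf_add_right, hs]
  show bf T u u + bf T u v + (bf T u v + bf T v v) = _
  show bf T u u + bf T u v + (bf T u v + bf T v v) = _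
  have h1 : Qf T u = bf T u u := rfl
  have h2 : Qf T v = bf T v v := rfl
  rw [h1, h2]; ring

lemma cs {T : H →L[ℂ] H} (hT : T.IsPositive) (x y : H) :
    (bf T x y) ^ 2 ≤ Qf T x * Qf T y := by
  have key : ∀ t : ℝ, 0 ≤ Qf T y * (t * t) + (2 * bf T x y) * t + Qf T x := by
    intro t
    have h0 : 0 ≤ Qf T (x + t • y) := by
      exact hT.re_inner_nonneg_left (x + t • y)
    have he : Qf T (x + t • y) = Qf T x + (Qf T y * (t*t)) + 2 * (t * bf T x y) := by
      rw [Qf_expand hT.isSelfAdjoint, bf_smul_right]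
      have : Qf T (t • y) = bf T (t • y) (t • y) := rfl
      rw [this, bf_smul_left, bf_smul_right]
      ring_nf
      rfl
    nlinarith [h0, he]
  have hd := discrim_le_zero key
  rw [discrim] at hd
  nlinarith [hd]

lemma bf_le_sqrt {T : H →L[ℂ] H} (hT : T.IsPositive) (x y : H) :
    bf T x y ≤ Real.sqrt (Qf T x) * Real.sqrt (Qf T y) := by
  have h := cs hT x y
  have hx : 0 ≤ Qf T x := by
    simpa [Qf, ContinuousLinearMap.reApplyInnerSelf, RCLike.re_to_complex] using hT.2 x
  calc bf T x y ≤ |bf T x y| := le_abs_self _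
    _ = Real.sqrt ((bf T x y) ^ 2) := (Real.sqrt_sq_eq_abs _).symm
    _ ≤ Real.sqrt (Qf T x * Qf T y) := Real.sqrt_le_sqrt h
    _ = _ := Real.sqrt_mul hx _

lemma Qf_nonneg' {T : H →L[ℂ] H} (hT : T.IsPositive) (x : H) : 0 ≤ Qf T x := by
  simpa [Qf, ContinuousLinearMap.reApplyInnerSelf, RCLike.re_to_complex] using hT.2 x

lemma sqrt_Qf_add {T : H →L[ℂ] H} (hT : T.IsPositive) (u v : H) :
    Real.sqrt (Qf T (u + v)) ≤ Real.sqrt (Qf T u) + Real.sqrt (Qf T v) := by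
  have hu := Qf_nonneg' hT u
  have hv := Qf_nonneg' hT v
  have h1 : Qf T (u + v) ≤ (Real.sqrt (Qf T u) + Real.sqrt (Qf T v)) ^ 2 := by
    rw [Qf_expand hT.isSelfAdjoint]
    have h2 := bf_le_sqrt hT u v
    nlinarith [Real.sq_sqrt hu, Real.sq_sqrt hv]
  calc Real.sqrt (Qf T (u + v)) ≤ Real.sqrt ((Real.sqrt (Qf T u) + Real.sqrt (Qf T v)) ^ 2) :=
        Real.sqrt_le_sqrt h1
    _ = _ := by rw [Real.sqrt_sq (by positivity)]

lemma Qf_double {T : H →L[ℂ] H} (hT : T.IsPositive) (u v : H) :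
    Qf T (u + v) ≤ 2 * Qf T u + 2 * Qf T v := by
  rw [Qf_expand hT.isSelfAdjoint]
  have h2 := bf_le_sqrt hT u v
  nlinarith [Real.sq_sqrt (Qf_nonneg' hT u), Real.sq_sqrt (Qf_nonneg' hT v),
    sq_nonneg (Real.sqrt (Qf T u) - Real.sqrt (Qf T v))]

lemma Qf_le_norm (T : H →L[ℂ] H) (x : H) : Qf T x ≤ ‖T‖ * ‖x‖ ^ 2 := by
  calc Qf T x ≤ ‖(inner ℂ (T x) x : ℂ)‖ := Complex.re_le_norm _
    _ ≤ ‖T x‖ * ‖x‖ := norm_inner_le_norm _ _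
    _ ≤ (‖T‖ * ‖x‖) * ‖x‖ := by
        have := T.le_opNorm x
        nlinarith [norm_nonneg x]
    _ = ‖T‖ * ‖x‖ ^ 2 := by ring

lemma norm_app_sq {T : H →L[ℂ] H} (hT : T.IsPositive) (x : H) :
    ‖T x‖ ^ 2 ≤ ‖T‖ * Qf T x := by
  have h1 : bf T x (T x) = ‖T x‖ ^ 2 := by
    have := inner_self_eq_norm_mul_norm (𝕜 := ℂ) (T x)
    rw [bf, RCLike.re_to_complex] at *
    rw [this]; ring
  have h2 := cs hT x (T x)
  rw [h1] at h2
  have h3 : Qf T (T x) ≤ ‖T‖ * (‖T x‖ ^ 2) := Qf_le_norm T (T x)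
  have hq := Qf_nonneg' hT x
  rcases eq_or_lt_of_le (sq_nonneg ‖T x‖) with h0 | h0
  · nlinarith [opNorm_nonneg T]
  · nlinarith [mul_le_mul_of_nonneg_left h3 hq]

lemma norm_mono {S T : H →L[ℂ] H} (hS : S.IsPositive) (hTS : (T - S).IsPositive) :
    ‖S‖ ≤ ‖T‖ := by
  have hQ : ∀ x, Qf S x ≤ Qf T x := by
    intro x
    have := Qf_nonneg' hTS x
    rw [Qf_sub_op] at this; linarith
  have hbd : ∀ x : H, ‖S x‖ ≤ Real.sqrt (‖S‖ * ‖T‖) * ‖x‖ := by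
    intro x
    have h1 : ‖S x‖ ^ 2 ≤ ‖S‖ * ‖T‖ * ‖x‖ ^ 2 := by
      calc ‖S x‖ ^ 2 ≤ ‖S‖ * Qf S x := norm_app_sq hS x
        _ ≤ ‖S‖ * Qf T x := by
            have := hQ x; nlinarith [opNorm_nonneg S]
        _ ≤ ‖S‖ * (‖T‖ * ‖x‖ ^ 2) := by
            nlinarith [Qf_le_norm T x, opNorm_nonneg S]
        _ = ‖S‖ * ‖T‖ * ‖x‖ ^ 2 := by ring
    calc ‖S x‖ = Real.sqrt (‖S x‖ ^ 2) := (Real.sqrt_sq (norm_nonneg _)).symm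
      _ ≤ Real.sqrt (‖S‖ * ‖T‖ * ‖x‖ ^ 2) := Real.sqrt_le_sqrt h1
      _ = Real.sqrt (‖S‖ * ‖T‖) * ‖x‖ := by
          rw [Real.sqrt_mul (by positivity), Real.sqrt_sq (norm_nonneg _)]
  have h4 : ‖S‖ ≤ Real.sqrt (‖S‖ * ‖T‖) := opNorm_le_bound S (Real.sqrt_nonneg _) hbd
  have h5 : ‖S‖ ^ 2 ≤ ‖S‖ * ‖T‖ := by
    calc ‖S‖ ^ 2 ≤ Real.sqrt (‖S‖ * ‖T‖) ^ 2 := by nlinarith [opNorm_nonneg S]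
      _ = ‖S‖ * ‖T‖ := Real.sq_sqrt (by positivity)
  rcases eq_or_lt_of_le (opNorm_nonneg S) with h0 | h0
  · rw [← h0]; exact opNorm_nonneg T
  · nlinarith

lemma Qf_nonneg {T : H →L[ℂ] H} (hT : T.IsPositive) (x : H) : 0 ≤ Qf T x := by
  simpa [Qf, ContinuousLinearMap.reApplyInnerSelf, RCLike.re_to_complex] using hT.2 x

lemma isPositive_of_Qf {T : H →L[ℂ] H} (hsa : IsSelfAdjoint T) (h : ∀ x, 0 ≤ Qf T x) :
    T.IsPositive := by
  refine ⟨hsa.isSymmetric, fun x => ?_⟩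
  simpa [Qf, ContinuousLinearMap.reApplyInnerSelf, RCLike.re_to_complex] using h x

lemma bf_symm {T : H →L[ℂ] H} (hT : IsSelfAdjoint T) (x y : H) : bf T x y = bf T y x := by
  have h := hT.isSymmetric x y
  simp only [ContinuousLinearMap.coe_coe] at h
  rw [bf, bf, h, ← inner_conj_symm (T y) x, Complex.conj_re]

/-- Arlinskii iteration for positive operators on a Hilbert space: the iterates
`B₀ = B`, `B_{n+1} = Bₙ - (Bₙ : A)` form a nonincreasing sequence of positive operators
converging strongly to a positive operator `Bs` which is mutually singular with `A`,
while `B - Bs` is absolutely continuous with respect to `A`. -/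
theorem statement0
    (A B : H →L[ℂ] H) (hA : A.IsPositive) (hB : B.IsPositive)
    (Bn : ℕ → H →L[ℂ] H) (hBnpos : ∀ n, (Bn n).IsPositive) (hB0 : Bn 0 = B)
    (hstep : ∀ n, (Bn n - Bn (n + 1)).IsPositive ∧ ∀ x : H,
      (inner ℂ ((Bn n - Bn (n + 1)) x) x : ℂ).re =
        ⨅ y : H, ((inner ℂ ((Bn n) (x - y)) (x - y) : ℂ).re + (inner ℂ (A y) y : ℂ).re)) :
    (∀ m n, m ≤ n → Bn n ≤ Bn m) ∧
    ∃ Bs : H →L[ℂ] H, Bs.IsPositive ∧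
      (∀ x : H, Tendsto (fun n => Bn n x) atTop (𝓝 (Bs x))) ∧
      MutuallySingular Bs A ∧
      AbsCont (B - Bs) A := by
  have hmono1 : ∀ n, Bn (n + 1) ≤ Bn n := fun n => (le_def _ _).mpr (hstep n).1
  have hanti : Antitone Bn := antitone_nat_of_succ_le hmono1
  have hposdiff : ∀ {m n : ℕ}, m ≤ n → (Bn m - Bn n).IsPositive :=
    fun h => (le_def _ _).mp (hanti h)
  have hqnonneg : ∀ n x, 0 ≤ Qf (Bn n) x := fun n x => Qf_nonneg' (hBnpos n) x
  have hqanti : ∀ x : H, Antitone fun n => Qf (Bn n) x := by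
    intro x m n h
    have := Qf_nonneg' (hposdiff h) x
    rw [Qf_sub_op] at this
    linarith
  have hqconv : ∀ x : H, ∃ L, Tendsto (fun n => Qf (Bn n) x) atTop (𝓝 L) := fun x =>
    ⟨_, tendsto_atTop_ciInf (hqanti x) ⟨0, by rintro _ ⟨n, rfl⟩; exact hqnonneg n x⟩⟩
  have hnormBn : ∀ n, ‖Bn n‖ ≤ ‖B‖ := by
    intro n
    refine norm_mono (hBnpos n) ?_
    have := hposdiff (Nat.zero_le n)
    rwa [hB0] at this
  have hkey : ∀ m n : ℕ, ∀ x : H, m ≤ n →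
      ‖Bn m x - Bn n x‖ ^ 2 ≤ (2 * ‖B‖ + 1) * (Qf (Bn m) x - Qf (Bn n) x) := by
    intro m n x h
    have hp := hposdiff h
    have h1 : ‖(Bn m - Bn n) x‖ ^ 2 ≤ ‖Bn m - Bn n‖ * Qf (Bn m - Bn n) x := norm_app_sq hp x
    have h2 : ‖Bn m - Bn n‖ ≤ 2 * ‖B‖ + 1 := by
      have := norm_sub_le (Bn m) (Bn n)
      have hm := hnormBn m; have hn := hnormBn n
      linarith
    have h3 : 0 ≤ Qf (Bn m - Bn n) x := Qf_nonneg' hp x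
    have h4 : ‖(Bn m - Bn n) x‖ ^ 2 ≤ (2 * ‖B‖ + 1) * Qf (Bn m - Bn n) x := by
      calc ‖(Bn m - Bn n) x‖ ^ 2 ≤ ‖Bn m - Bn n‖ * Qf (Bn m - Bn n) x := h1
        _ ≤ (2 * ‖B‖ + 1) * Qf (Bn m - Bn n) x := by nlinarith
    rw [Qf_sub_op] at h4
    simpa [ContinuousLinearMap.sub_apply] using h4
  have hBnorm_pos : (0:ℝ) < 2 * ‖B‖ + 1 := by positivity
  have hCauchy : ∀ x : H, CauchySeq fun n => Bn n x := by
    intro x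
    rw [Metric.cauchySeq_iff]
    intro ε hε
    obtain ⟨L, hL⟩ := hqconv x
    have hqc : CauchySeq fun n => Qf (Bn n) x := hL.cauchySeq
    obtain ⟨N, hN⟩ := Metric.cauchySeq_iff.mp hqc (ε ^ 2 / (2 * ‖B‖ + 1)) (by positivity)
    refine ⟨N, fun m hm n hn => ?_⟩
    have key : ∀ a b : ℕ, a ≤ b → N ≤ a → N ≤ b → ‖Bn a x - Bn b x‖ < ε := by
      intro a b hab ha hb
      have h1 := hkey a b x hab
      have h2 := hN a ha b hb
      rw [Real.dist_eq] at h2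
      have h3 : Qf (Bn a) x - Qf (Bn b) x ≤ |Qf (Bn a) x - Qf (Bn b) x| := le_abs_self _
      have h4 : ‖Bn a x - Bn b x‖ ^ 2 < ε ^ 2 := by
        calc ‖Bn a x - Bn b x‖ ^ 2 ≤ (2 * ‖B‖ + 1) * (Qf (Bn a) x - Qf (Bn b) x) := h1
          _ ≤ (2 * ‖B‖ + 1) * |Qf (Bn a) x - Qf (Bn b) x| := by nlinarith
          _ < (2 * ‖B‖ + 1) * (ε ^ 2 / (2 * ‖B‖ + 1)) := by
              exact (mul_lt_mul_iff_right₀ hBnorm_pos).mpr h2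
          _ = ε ^ 2 := by field_simp
      nlinarith [norm_nonneg (Bn a x - Bn b x)]
    rw [dist_eq_norm]
    rcases le_total m n with h | h
    · exact key m n h hm hn
    · have := key n m h hn hm
      rwa [norm_sub_rev] at this
  have hex : ∀ x : H, ∃ l, Tendsto (fun n => Bn n x) atTop (𝓝 l) := fun x =>
    cauchySeq_tendsto_of_complete (hCauchy x)
  choose g hg using hex
  have hadd : ∀ x y : H, g (x + y) = g x + g y := by
    intro x y
    refine tendsto_nhds_unique ?_ ((hg x).add (hg y))
    simpa only [map_add] using hg (x + y)
  have hsmul : ∀ (c : ℂ) (x : H), g (c • x) = c • g x := by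
    intro c x
    refine tendsto_nhds_unique ?_ ((hg x).const_smul c)
    simpa only [map_smul] using hg (c • x)
  have hbound : ∀ x : H, ‖g x‖ ≤ ‖B‖ * ‖x‖ := by
    intro x
    refine le_of_tendsto (hg x).norm (Eventually.of_forall fun n => ?_)
    calc ‖Bn n x‖ ≤ ‖Bn n‖ * ‖x‖ := (Bn n).le_opNorm x
      _ ≤ ‖B‖ * ‖x‖ := by nlinarith [hnormBn n, norm_nonneg x]
  set Bs : H →L[ℂ] H := LinearMap.mkContinuous
    { toFun := g
      map_add' := hadd
      map_smul' := by intro c x; simpa using hsmul c x } ‖B‖ hbound with hBsdef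
  have hgBs : ∀ x, Bs x = g x := fun _ => rfl
  have hTend : ∀ x : H, Tendsto (fun n => Bn n x) atTop (𝓝 (Bs x)) := by
    intro x; rw [hgBs]; exact hg x
  have hQBs : ∀ x : H, Tendsto (fun n => Qf (Bn n) x) atTop (𝓝 (Qf Bs x)) := by
    intro x
    have h1 : Tendsto (fun n => (inner ℂ (Bn n x) x : ℂ)) atTop (𝓝 (inner ℂ (Bs x) x : ℂ)) :=
      (hTend x).inner tendsto_const_nhds
    exact (Complex.continuous_re.tendsto _).comp h1
  have hBssym : IsSelfAdjoint Bs := by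
    refine LinearMap.IsSymmetric.isSelfAdjoint ?_
    intro x y
    simp only [ContinuousLinearMap.coe_coe]
    have e1 : Tendsto (fun n : ℕ => (inner ℂ (Bn n x) y : ℂ)) atTop (𝓝 (inner ℂ (Bs x) y)) :=
      (hTend x).inner tendsto_const_nhds
    have h2 : ∀ n, (inner ℂ (Bn n x) y : ℂ) = inner ℂ x (Bn n y) := by
      intro n
      have := (hBnpos n).isSelfAdjoint.isSymmetric x y
      simpa using this
    have h3 : Tendsto (fun n : ℕ => (inner ℂ x (Bn n y) : ℂ)) atTop (𝓝 (inner ℂ x (Bs y))) :=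
      Tendsto.inner tendsto_const_nhds (hTend y)
    have e2 : Tendsto (fun n : ℕ => (inner ℂ (Bn n x) y : ℂ)) atTop (𝓝 (inner ℂ x (Bs y))) :=
      h3.congr fun n => (h2 n).symm
    exact tendsto_nhds_unique e1 e2
  have hBspos : Bs.IsPositive :=
    isPositive_of_Qf hBssym fun x =>
      ge_of_tendsto (hQBs x) (Eventually.of_forall fun n => hqnonneg n x)
  have hBsle : ∀ n, Bs ≤ Bn n := by
    intro n
    refine (le_def _ _).mpr (isPositive_of_Qf ((hBnpos n).isSelfAdjoint.sub hBssym) fun x => ?_)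
    rw [Qf_sub_op, sub_nonneg]
    exact le_of_tendsto (hQBs x) (eventually_atTop.2 ⟨n, fun k hk => hqanti x hk⟩)
  refine ⟨fun m n h => hanti h, Bs, hBspos, hTend, ?_, ?_⟩
  · -- MutuallySingular
    intro C hC hCBs hCA
    have hCle : ∀ n z, Qf C z ≤ Qf (Bn n) z := by
      intro n z
      have := Qf_nonneg' ((le_def _ _).mp (le_trans hCBs (hBsle n))) z
      rw [Qf_sub_op] at this; linarith
    have hCA' : ∀ z, Qf C z ≤ Qf A z := by
      intro z
      have := Qf_nonneg' ((le_def _ _).mp hCA) z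
      rw [Qf_sub_op] at this; linarith
    have hQC0 : ∀ x, Qf C x = 0 := by
      intro x
      have hhalf : ∀ n, Qf C x / 2 ≤ Qf (Bn n) x - Qf (Bn (n + 1)) x := by
        intro n
        have heq := (hstep n).2 x
        rw [show (inner ℂ ((Bn n - Bn (n + 1)) x) x : ℂ).re = Qf (Bn n - Bn (n + 1)) x from rfl,
          Qf_sub_op] at heq
        rw [heq]
        refine le_ciInf fun y => ?_
        show Qf C x / 2 ≤ Qf (Bn n) (x - y) + Qf A y
        have h1 : Qf C x ≤ 2 * Qf C (x - y) + 2 * Qf C y := by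
          have := Qf_double hC (x - y) y
          simpa using this
        have h2 := hCle n (x - y)
        have h3 := hCA' y
        linarith
      obtain ⟨L, hL⟩ := hqconv x
      have hconv : Tendsto (fun n => Qf (Bn n) x - Qf (Bn (n + 1)) x) atTop (𝓝 0) := by
        have h2 : Tendsto (fun n => Qf (Bn (n + 1)) x) atTop (𝓝 L) :=
          hL.comp (tendsto_add_atTop_nat 1)
        simpa using hL.sub h2
      have h0 : Qf C x / 2 ≤ 0 := ge_of_tendsto hconv (Eventually.of_forall hhalf)
      have := Qf_nonneg' hC x
      linarith
    ext x
    rw [ContinuousLinearMap.zero_apply]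
    have h1 := norm_app_sq hC x
    rw [hQC0 x] at h1
    have := norm_nonneg (C x)
    have h2 : ‖C x‖ = 0 := by nlinarith
    exact norm_eq_zero.mp h2
  · -- AbsCont
    intro x hAx hCau
    set D : H →L[ℂ] H := B - Bs with hD
    have hDpos : D.IsPositive := by
      have := (le_def _ _).mp (hBsle 0)
      rwa [hB0] at this
    have hSpos : ∀ n, (B - Bn n).IsPositive := by
      intro n
      have := hposdiff (Nat.zero_le n)
      rwa [hB0] at this
    have hDSpos : ∀ n, (Bn n - Bs).IsPositive := fun n => (le_def _ _).mp (hBsle n)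
    have hsplit : ∀ (n : ℕ) (z w : H), bf D z w = bf (B - Bn n) z w + bf (Bn n - Bs) z w := by
      intro n z w
      rw [← bf_add_op]
      congr 1
      rw [sub_add_sub_cancel]
    have hQ1 : ∀ n z, Qf (B - Bn n) z ≤ Qf D z := by
      intro n z
      have h1 := Qf_nonneg' (hDSpos n) z
      rw [Qf_sub_op] at h1
      rw [hD, Qf_sub_op, Qf_sub_op]
      linarith
    have hQ2 : ∀ n z, Qf (Bn n - Bs) z ≤ Qf D z := by
      intro n z
      have h1 := Qf_nonneg' (hSpos n) z
      rw [Qf_sub_op] at h1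
      rw [hD, Qf_sub_op, Qf_sub_op]
      linarith
    have hQfzero : ∀ T : H →L[ℂ] H, Qf T 0 = 0 := by intro T; simp [Qf]
    have hSnA : ∀ n z, Qf (B - Bn n) z ≤ n * Qf A z := by
      intro n z
      induction n with
      | zero =>
        rw [hB0, Qf_sub_op]
        simp
      | succ n ih =>
        have heq := (hstep n).2 z
        rw [show (inner ℂ ((Bn n - Bn (n + 1)) z) z : ℂ).re = Qf (Bn n - Bn (n + 1)) z from rfl,
          Qf_sub_op] at heq
        have hle : Qf (Bn n) z - Qf (Bn (n + 1)) z ≤ Qf A z := by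
          rw [heq]
          have hbdd : BddBelow (Set.range fun y =>
              (inner ℂ ((Bn n) (z - y)) (z - y) : ℂ).re + (inner ℂ (A y) y : ℂ).re) := by
            refine ⟨0, ?_⟩
            rintro _ ⟨y, rfl⟩
            have h1 : 0 ≤ Qf (Bn n) (z - y) := Qf_nonneg' (hBnpos n) _
            have h2 : 0 ≤ Qf A y := Qf_nonneg' hA _
            exact add_nonneg h1 h2
          have h3 := ciInf_le hbdd z
          calc (⨅ y : H, ((inner ℂ ((Bn n) (z - y)) (z - y) : ℂ).re + (inner ℂ (A y) y : ℂ).re))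
              ≤ (inner ℂ ((Bn n) (z - z)) (z - z) : ℂ).re + (inner ℂ (A z) z : ℂ).re := h3
            _ = Qf A z := by
                rw [sub_self, show (inner ℂ ((Bn n) (0:H)) (0:H) : ℂ).re = Qf (Bn n) 0 from rfl,
                  hQfzero]
                simp [Qf]
        have hrw : Qf (B - Bn (n + 1)) z = Qf (B - Bn n) z + (Qf (Bn n) z - Qf (Bn (n + 1)) z) := by
          rw [Qf_sub_op, Qf_sub_op]; ring
        rw [hrw]
        push_cast
        linarith
    have hDSlim : ∀ z, Tendsto (fun n => Qf (Bn n - Bs) z) atTop (𝓝 0) := by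
      intro z
      have h1 : Tendsto (fun n => Qf (Bn n) z - Qf Bs z) atTop (𝓝 0) := by
        simpa using (hQBs z).sub (tendsto_const_nhds (x := Qf Bs z))
      exact h1.congr fun n => (Qf_sub_op _ _ _).symm
    -- convert Cauchy hypothesis
    have hCau' : ∀ δ : ℝ, 0 < δ → ∃ N, ∀ j k, N ≤ j → N ≤ k → Qf D (x j - x k) < δ := by
      intro δ hδ
      have h1 := Metric.tendsto_nhds.mp hCau δ hδ
      rw [prod_atTop_atTop_eq, eventually_atTop] at h1
      obtain ⟨p0, hp0⟩ := h1
      refine ⟨max p0.1 p0.2, fun j k hj hk => ?_⟩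
      have h2 := hp0 (j, k) ⟨le_trans (le_max_left _ _) hj, le_trans (le_max_right _ _) hk⟩
      rw [Real.dist_eq, sub_zero] at h2
      exact lt_of_le_of_lt (le_abs_self _) h2
    show Tendsto (fun j => Qf D (x j)) atTop (𝓝 0)
    rw [Metric.tendsto_atTop]
    intro ε hε
    obtain ⟨N1, hN1⟩ := hCau' 1 one_pos
    set M : ℝ := Real.sqrt (Qf D (x N1)) + 1 with hMdef
    have hM0 : 0 < M := by positivity
    have hM : ∀ j, N1 ≤ j → Real.sqrt (Qf D (x j)) ≤ M := by
      intro j hj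
      have h1 : x j = (x j - x N1) + x N1 := by abel
      calc Real.sqrt (Qf D (x j)) = Real.sqrt (Qf D ((x j - x N1) + x N1)) := by rw [← h1]
        _ ≤ Real.sqrt (Qf D (x j - x N1)) + Real.sqrt (Qf D (x N1)) := sqrt_Qf_add hDpos _ _
        _ ≤ 1 + Real.sqrt (Qf D (x N1)) := by
            have h2 : Qf D (x j - x N1) ≤ 1 := le_of_lt (hN1 j N1 hj le_rfl)
            have h3 : Real.sqrt (Qf D (x j - x N1)) ≤ 1 := by
              calc Real.sqrt (Qf D (x j - x N1)) ≤ Real.sqrt 1 := Real.sqrt_le_sqrt h2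
                _ = 1 := Real.sqrt_one
            linarith
        _ = M := by rw [hMdef]; ring
    set δ : ℝ := ε / (3 * M + 1) with hδdef
    have hδ : 0 < δ := by positivity
    have h3Mδ : 3 * M * δ < ε := by
      have h1 : (0:ℝ) < 3 * M + 1 := by positivity
      have h2 : 3 * M * δ = 3 * M * ε / (3 * M + 1) := by rw [hδdef]; ring
      rw [h2, div_lt_iff₀ h1]
      nlinarith
    obtain ⟨N2, hN2⟩ := hCau' (δ ^ 2) (by positivity)
    set m : ℕ := max N1 N2 with hmdef
    obtain ⟨n, hn⟩ : ∃ n, Qf (Bn n - Bs) (x m) < δ ^ 2 := by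
      obtain ⟨N, hN⟩ := Metric.tendsto_atTop.mp (hDSlim (x m)) (δ ^ 2) (by positivity)
      refine ⟨N, ?_⟩
      have := hN N le_rfl
      rw [Real.dist_eq, sub_zero] at this
      exact lt_of_le_of_lt (le_abs_self _) this
    obtain ⟨J0, hJ0⟩ := Metric.tendsto_atTop.mp hAx (δ ^ 2 / (n + 1)) (by positivity)
    refine ⟨max J0 (max N1 N2), fun j hj => ?_⟩
    have hj0 : J0 ≤ j := le_trans (le_max_left _ _) hj
    have hj1 : N1 ≤ j := le_trans (le_trans (le_max_left _ _) (le_max_right _ _)) hj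
    have hj2 : N2 ≤ j := le_trans (le_trans (le_max_right _ _) (le_max_right _ _)) hj
    have hmN1 : N1 ≤ m := le_max_left _ _
    have hmN2 : N2 ≤ m := le_max_right _ _
    -- bounds
    have hQA : Qf A (x j) < δ ^ 2 / (n + 1) := by
      have := hJ0 j hj0
      rw [Real.dist_eq, sub_zero] at this
      exact lt_of_le_of_lt (le_abs_self _) this
    have hSn_small : Qf (B - Bn n) (x j) ≤ δ ^ 2 := by
      have h1 := hSnA n (x j)
      have h2 : (n:ℝ) * Qf A (x j) ≤ δ ^ 2 := by
        have h3 : 0 ≤ Qf A (x j) := Qf_nonneg' hA _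
        have h4 : (n:ℝ) * Qf A (x j) ≤ (n:ℝ) * (δ ^ 2 / (n + 1)) := by
          have : (0:ℝ) ≤ (n:ℝ) := Nat.cast_nonneg n
          nlinarith
        have h5 : (n:ℝ) * (δ ^ 2 / (n + 1)) ≤ δ ^ 2 := by
          have hn1 : (0:ℝ) < (n:ℝ) + 1 := by positivity
          have he : (n:ℝ) * (δ ^ 2 / (n + 1)) = δ ^ 2 * ((n:ℝ) / ((n:ℝ) + 1)) := by
            ring
          rw [he]
          have hd1 : (n:ℝ) / ((n:ℝ) + 1) ≤ 1 := by
            rw [div_le_one hn1]; linarith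
          nlinarith [sq_nonneg δ]
        linarith
      linarith
    have hQDj : Real.sqrt (Qf D (x j)) ≤ M := hM j hj1
    have hQDm : Real.sqrt (Qf D (x m)) ≤ M := hM m hmN1
    have hjm : Qf D (x j - x m) < δ ^ 2 := hN2 j m hj2 hmN2
    have sd : Real.sqrt (δ ^ 2) = δ := Real.sqrt_sq hδ.le
    have s1 : Real.sqrt (Qf D (x j - x m)) ≤ δ := by
      rw [← sd]; exact Real.sqrt_le_sqrt hjm.le
    have s2 : Real.sqrt (Qf (B - Bn n) (x j)) ≤ δ := by
      rw [← sd]; exact Real.sqrt_le_sqrt hSn_small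
    have s3 : Real.sqrt (Qf (Bn n - Bs) (x m)) ≤ δ := by
      rw [← sd]; exact Real.sqrt_le_sqrt hn.le
    have s4 : Real.sqrt (Qf (B - Bn n) (x m)) ≤ M :=
      le_trans (Real.sqrt_le_sqrt (hQ1 n (x m))) hQDm
    have s5 : Real.sqrt (Qf (Bn n - Bs) (x j)) ≤ M :=
      le_trans (Real.sqrt_le_sqrt (hQ2 n (x j))) hQDj
    have hsum : (x j - x m) + x m = x j := by abel
    have e1 : Qf D (x j) = bf D (x j) (x j - x m) + bf D (x j) (x m) := by
      rw [← bf_add_right, hsum]; rfl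
    have e2 : bf D (x j) (x m) = bf (B - Bn n) (x j) (x m) + bf (Bn n - Bs) (x j) (x m) :=
      hsplit n (x j) (x m)
    have t1 : bf D (x j) (x j - x m) ≤ M * δ :=
      le_trans (bf_le_sqrt hDpos _ _)
        (mul_le_mul hQDj s1 (Real.sqrt_nonneg _) hM0.le)
    have t2 : bf (B - Bn n) (x j) (x m) ≤ δ * M :=
      le_trans (bf_le_sqrt (hSpos n) _ _)
        (mul_le_mul s2 s4 (Real.sqrt_nonneg _) hδ.le)
    have t3 : bf (Bn n - Bs) (x j) (x m) ≤ M * δ :=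
      le_trans (bf_le_sqrt (hDSpos n) _ _)
        (mul_le_mul s5 s3 (Real.sqrt_nonneg _) hM0.le)
    have hfinal : Qf D (x j) < ε := by linarith
    rw [Real.dist_eq, sub_zero, abs_of_nonneg (Qf_nonneg' hDpos _)]
    exact hfinal
end

section
/- Let H be a complex Hilbert space, let A and B be positive bounded operators on H, and let (B_n) be a sequence of positive bounded operators on H such that B_0 = B and, for every n, B_n − B_{n+1} is positive and satisfies ⟪(B_n − B_{n+1})x, x⟫ = inf{ ⟪B_n(x−y), x−y⟫ + ⟪A y, y⟫ : y ∈ H } for all x ∈ H. Then for every n ∈ ℕ one has B − B_n ≤ n·A in the operator order. -/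
open ContinuousLinearMap Filter Topology

variable {H : Type*} [NormedAddCommGroup H] [InnerProductSpace ℂ H] [CompleteSpace H]

/-- For the Arlinskii iterates `B₀ = B`, `B_{n+1} = Bₙ - (Bₙ : A)`, one has
`B - Bₙ ≤ n • A` in the Loewner order for every `n`. -/
theorem statement1
    (A B : H →L[ℂ] H) (hA : A.IsPositive) (hB : B.IsPositive)
    (Bn : ℕ → H →L[ℂ] H) (hBnpos : ∀ n, (Bn n).IsPositive) (hB0 : Bn 0 = B)
    (hstep : ∀ n, (Bn n - Bn (n + 1)).IsPositive ∧ ∀ x : H,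
      (inner ℂ ((Bn n - Bn (n + 1)) x) x : ℂ).re =
        ⨅ y : H, ((inner ℂ ((Bn n) (x - y)) (x - y) : ℂ).re + (inner ℂ (A y) y : ℂ).re)) :
    ∀ n : ℕ, B - Bn n ≤ n • A := by
  -- First: each difference is dominated by A.
  have key : ∀ n : ℕ, Bn n - Bn (n + 1) ≤ A := by
    intro n
    rw [ContinuousLinearMap.le_def]
    constructor
    · exact (hA.isSelfAdjoint.sub (hstep n).1.isSelfAdjoint).isSymmetric
    · intro x
      have hle : (inner ℂ ((Bn n - Bn (n + 1)) x) x : ℂ).re ≤ (inner ℂ (A x) x : ℂ).re := by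
        rw [(hstep n).2 x]
        have hbdd : BddBelow (Set.range fun y : H =>
            ((inner ℂ ((Bn n) (x - y)) (x - y) : ℂ).re + (inner ℂ (A y) y : ℂ).re)) := by
          refine ⟨0, ?_⟩
          rintro _ ⟨y, rfl⟩
          exact add_nonneg ((hBnpos n).re_inner_nonneg_left _) (hA.re_inner_nonneg_left _)
        calc (⨅ y : H, ((inner ℂ ((Bn n) (x - y)) (x - y) : ℂ).re + (inner ℂ (A y) y : ℂ).re))
            ≤ (inner ℂ ((Bn n) (x - x)) (x - x) : ℂ).re + (inner ℂ (A x) x : ℂ).re :=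
              ciInf_le hbdd x
          _ = (inner ℂ (A x) x : ℂ).re := by simp
      have : (inner ℂ ((A - (Bn n - Bn (n + 1))) x) x : ℂ).re
          = (inner ℂ (A x) x : ℂ).re - (inner ℂ ((Bn n - Bn (n + 1)) x) x : ℂ).re := by
        simp [inner_sub_left]
      show 0 ≤ (A - (Bn n - Bn (n + 1))).reApplyInnerSelf x
      rw [reApplyInnerSelf, RCLike.re_to_complex, this]
      linarith
  intro n
  induction n with
  | zero => simp [hB0]
  | succ n ih =>
    have h2 : B - Bn (n + 1) = (B - Bn n) + (Bn n - Bn (n + 1)) := by abel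
    have h3 : ((n + 1 : ℕ) • A : H →L[ℂ] H) = (n : ℕ) • A + A := by
      rw [add_smul, one_smul]
    rw [h2, h3, ContinuousLinearMap.le_def]
    have := (key n)
    rw [ContinuousLinearMap.le_def] at this ih
    have := this.add ih
    convert this using 1
    abel
end

section
/- Let H be a complex Hilbert space, let A and B be positive bounded operators on H, set C = A + B, and let Q denote the orthogonal projection onto the closure of the range of C. Suppose Ã and B̃ are positive bounded operators on H with Ã + B̃ = Q, A = C^{1/2} Ã C^{1/2} and B = C^{1/2} B̃ C^{1/2}. If P̃ is a positive bounded operator satisfying ⟪P̃ξ, ξ⟫ = inf{ ⟪Ã(ξ−η), ξ−η⟫ + ⟪B̃η, η⟫ : η ∈ H } for all ξ ∈ H, then the operator C^{1/2} P̃ C^{1/2} satisfies ⟪C^{1/2} P̃ C^{1/2} x, x⟫ = inf{ ⟪A(x−y), x−y⟫ + ⟪B y, y⟫ : y ∈ H } for all x ∈ H; that is, C^{1/2}(Ã : B̃)C^{1/2} = A : B. -/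
open ContinuousLinearMap Filter Topology

variable {H : Type*} [NormedAddCommGroup H] [InnerProductSpace ℂ H] [CompleteSpace H]

lemma pos_apply_eq_zero (T : H →L[ℂ] H) (hT : T.IsPositive) (w : H)
    (hw : (inner ℂ (T w) w : ℂ).re = 0) : T w = 0 := by
  have hsymm : ∀ u v : H, (inner ℂ (T u) v : ℂ) = inner ℂ u (T v) :=
    hT.1
  by_contra h
  have hTw : T w ≠ 0 := h
  set s : ℝ := ‖T w‖ ^ 2 with hs_def
  have hs : 0 < s := by rw [hs_def]; exact pow_pos (norm_pos_iff.mpr hTw) 2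
  set c : ℝ := (inner ℂ (T (T w)) (T w) : ℂ).re with hc_def
  have hc : 0 ≤ c := hT.re_inner_nonneg_left _
  have hc1 : (0:ℝ) < c + 1 := by linarith
  set t : ℝ := -s / (c + 1) with ht_def
  have ht_neg : t < 0 := div_neg_of_neg_of_pos (by linarith) hc1
  have htc : t * (c + 1) = -s := by rw [ht_def]; field_simp
  have key : (0:ℝ) ≤ (inner ℂ (T (w + (t:ℂ) • T w)) (w + (t:ℂ) • T w) : ℂ).re :=
    hT.re_inner_nonneg_left _
  have h1 : (inner ℂ (T (T w)) w : ℂ) = inner ℂ (T w) (T w) := by rw [hsymm]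
  have h2 : ((inner ℂ (T w) (T w) : ℂ)).re = s := by
    have := inner_self_eq_norm_sq (𝕜 := ℂ) (T w)
    simpa [hs_def] using this
  have expand : (inner ℂ (T (w + (t:ℂ) • T w)) (w + (t:ℂ) • T w) : ℂ).re
      = 2 * t * s + t ^ 2 * c := by
    rw [map_add, map_smul, inner_add_left, inner_add_right, inner_add_right,
      inner_smul_left, inner_smul_right, inner_smul_left, inner_smul_right, h1]
    simp only [Complex.add_re, Complex.conj_ofReal, Complex.re_ofReal_mul, hw, h2,
      ← hc_def]
    ring
  rw [expand] at key
  nlinarith [key, htc, mul_pos (neg_pos.mpr ht_neg) hs, sq_nonneg t,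
    mul_pos (mul_pos (neg_pos.mpr ht_neg) (neg_pos.mpr ht_neg)) hc1]

lemma quad_add_zero (T : H →L[ℂ] H)
    (hsymm : ∀ u v : H, (inner ℂ (T u) v : ℂ) = inner ℂ u (T v))
    (u w : H) (hw : T w = 0) :
    (inner ℂ (T (u + w)) (u + w) : ℂ) = inner ℂ (T u) u := by
  rw [map_add, hw, add_zero, inner_add_right, hsymm u w, hw, inner_zero_right, add_zero]

/-- If `C = A + B`, `R = C^{1/2}` is the positive square root of `C`, `Q` is the orthogonal
projection onto the closure of the range of `C`, and `Ã, B̃` are positive operators with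
`Ã + B̃ = Q`, `A = C^{1/2} Ã C^{1/2}`, `B = C^{1/2} B̃ C^{1/2}`, then
`C^{1/2} (Ã : B̃) C^{1/2} = A : B`, in the sense that the quadratic form of
`C^{1/2} (Ã : B̃) C^{1/2}` is the parallel-sum infimum associated with `A` and `B`. -/
theorem statement3
    (A B : H →L[ℂ] H) (hA : A.IsPositive) (hB : B.IsPositive)
    (R : H →L[ℂ] H) (hRpos : R.IsPositive) (hRsq : R * R = A + B)
    (Q : H →L[ℂ] H)
    (hQ : Q = (LinearMap.range ((A + B : H →L[ℂ] H) : H →ₗ[ℂ] H)).topologicalClosure.subtypeL ∘L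
        (LinearMap.range ((A + B : H →L[ℂ] H) : H →ₗ[ℂ] H)).topologicalClosure.orthogonalProjectionOnto)
    (At Bt : H →L[ℂ] H) (hAt : At.IsPositive) (hBt : Bt.IsPositive)
    (hsum : At + Bt = Q)
    (hfA : A = R * At * R) (hfB : B = R * Bt * R)
    (Pt : H →L[ℂ] H) (hPtpos : Pt.IsPositive)
    (hPt : ∀ ξ : H, (inner ℂ (Pt ξ) ξ : ℂ).re =
      ⨅ η : H, ((inner ℂ (At (ξ - η)) (ξ - η) : ℂ).re + (inner ℂ (Bt η) η : ℂ).re)) :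
    ∀ x : H, (inner ℂ ((R * Pt * R) x) x : ℂ).re =
      ⨅ y : H, ((inner ℂ (A (x - y)) (x - y) : ℂ).re + (inner ℂ (B y) y : ℂ).re) := by
  intro x
  have hRsymm : ∀ u v : H, (inner ℂ (R u) v : ℂ) = inner ℂ u (R v) :=
    hRpos.1
  have hAtsymm : ∀ u v : H, (inner ℂ (At u) v : ℂ) = inner ℂ u (At v) :=
    hAt.1
  have hBtsymm : ∀ u v : H, (inner ℂ (Bt u) v : ℂ) = inner ℂ u (Bt v) :=
    hBt.1
  set F : H → ℝ := fun η =>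
    (inner ℂ (At (R x - η)) (R x - η) : ℂ).re + (inner ℂ (Bt η) η : ℂ).re with hF
  have hFnn : ∀ v, 0 ≤ F v := fun v =>
    add_nonneg (hAt.re_inner_nonneg_left _) (hBt.re_inner_nonneg_left _)
  have bddF : BddBelow (Set.range F) := ⟨0, by rintro _ ⟨η, rfl⟩; exact hFnn η⟩
  have bddFR : BddBelow (Set.range fun y => F (R y)) :=
    ⟨0, by rintro _ ⟨y, rfl⟩; exact hFnn (R y)⟩
  have hLHS : (inner ℂ ((R * Pt * R) x) x : ℂ).re = ⨅ η, F η := by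
    have h1 : ((R * Pt * R) x : H) = R (Pt (R x)) := rfl
    rw [h1, hRsymm]
    exact hPt (R x)
  have hRHS : (⨅ y : H, ((inner ℂ (A (x - y)) (x - y) : ℂ).re + (inner ℂ (B y) y : ℂ).re))
      = ⨅ y, F (R y) := by
    congr 1; funext y
    have hA' : (inner ℂ (A (x - y)) (x - y) : ℂ) = inner ℂ (At (R x - R y)) (R x - R y) := by
      rw [hfA]
      have : ((R * At * R) (x - y) : H) = R (At (R (x - y))) := rfl
      rw [this, hRsymm, map_sub]
    have hB' : (inner ℂ (B y) y : ℂ) = inner ℂ (Bt (R y)) (R y) := by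
      rw [hfB]
      have : ((R * Bt * R) y : H) = R (Bt (R y)) := rfl
      rw [this, hRsymm]
    rw [hF]; simp only [hA', hB']
  rw [hLHS, hRHS]
  apply le_antisymm
  · exact le_ciInf fun y => ciInf_le bddF (R y)
  · refine le_ciInf fun η => ?_
    set M := (LinearMap.range ((A + B : H →L[ℂ] H) : H →ₗ[ℂ] H)).topologicalClosure with hM
    set w : H := η - Q η with hwdef
    have hQη : Q η = ((M.orthogonalProjectionOnto η : M) : H) := by rw [hQ]; rfl
    have hwmem : w ∈ Mᗮ := by
      rw [hwdef, hQη]; exact Submodule.sub_starProjection_mem_orthogonal (K := M) η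
    have hQw : Q w = 0 := by
      rw [hQ]
      show ((M.orthogonalProjectionOnto w : M) : H) = 0
      rw [Submodule.orthogonalProjectionOnto_apply_of_mem_orthogonal hwmem]
      rfl
    have hsum_w : At w + Bt w = 0 := by
      have := congrArg (fun T : H →L[ℂ] H => T w) hsum
      simpa [hQw] using this
    have h0 : (inner ℂ (At w) w : ℂ).re + (inner ℂ (Bt w) w : ℂ).re = 0 := by
      have h1 : (inner ℂ (At w + Bt w) w : ℂ).re = 0 := by rw [hsum_w]; simp
      rw [inner_add_left] at h1
      simpa using h1
    have ha : 0 ≤ (inner ℂ (At w) w : ℂ).re := hAt.re_inner_nonneg_left w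
    have hb : 0 ≤ (inner ℂ (Bt w) w : ℂ).re := hBt.re_inner_nonneg_left w
    have hAtw : At w = 0 := pos_apply_eq_zero At hAt w (by linarith)
    have hBtw : Bt w = 0 := pos_apply_eq_zero Bt hBt w (by linarith)
    have hη : η = Q η + w := by rw [hwdef]; abel
    have hFη : F η = F (Q η) := by
      rw [hF]
      have e1 : (inner ℂ (Bt η) η : ℂ) = inner ℂ (Bt (Q η)) (Q η) := by
        conv_lhs => rw [hη]
        exact quad_add_zero Bt hBtsymm (Q η) w hBtw
      have e2 : (inner ℂ (At (R x - η)) (R x - η) : ℂ)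
          = inner ℂ (At (R x - Q η)) (R x - Q η) := by
        have hr : R x - η = (R x - Q η) + (-w) := by rw [hwdef]; abel
        rw [hr]
        exact quad_add_zero At hAtsymm (R x - Q η) (-w) (by rw [map_neg, hAtw, neg_zero])
      simp only [e1, e2]
    have hQmem : Q η ∈ closure (Set.range (R : H → H)) := by
      have h1 : Q η ∈ M := by rw [hQη]; exact (M.orthogonalProjectionOnto η).2
      have h2 : (M : Set H) ⊆ closure (Set.range (R : H → H)) := by
        rw [hM, Submodule.topologicalClosure_coe]
        apply closure_mono
        rintro z hz
        obtain ⟨v, rfl⟩ := LinearMap.mem_range.mp hz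
        exact ⟨R v, by rw [← hRsq]; rfl⟩
      exact h2 h1
    rw [hFη]
    obtain ⟨u, hu_mem, hu_lim⟩ := mem_closure_iff_seq_limit.mp hQmem
    have hcont : Continuous F := by
      rw [hF]
      have c1 : Continuous fun η : H => R x - η := continuous_const.sub continuous_id
      exact (Complex.continuous_re.comp ((At.continuous.comp c1).inner c1)).add
        (Complex.continuous_re.comp (Bt.continuous.inner continuous_id))
    have htend : Tendsto (fun n => F (u n)) atTop (𝓝 (F (Q η))) :=
      (hcont.tendsto _).comp hu_lim
    refine ge_of_tendsto htend (Eventually.of_forall fun n => ?_)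
    obtain ⟨y, hy⟩ := hu_mem n
    rw [← hy]
    exact ciInf_le bddFR y
end

section
/- Let H be a complex Hilbert space and let S, T be positive bounded operators on H such that S + T is invertible. Then the operator S(S+T)^{-1}T is positive, equals T(S+T)^{-1}S, and satisfies ⟪S(S+T)^{-1}T x, x⟫ = inf{ ⟪S(x−y), x−y⟫ + ⟪T y, y⟫ : y ∈ H } for all x ∈ H; that is, S : T = S(S+T)^{-1}T. -/
open ContinuousLinearMap Filter Topology

variable {H : Type*} [NormedAddCommGroup H] [InnerProductSpace ℂ H] [CompleteSpace H]

/-- If `S, T` are positive operators with `S + T` invertible, then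
`S (S + T)⁻¹ T` is positive, equals `T (S + T)⁻¹ S`, and is the parallel sum `S : T`,
i.e. its quadratic form is `inf_y (⟪S(x - y), x - y⟫ + ⟪T y, y⟫)`. -/
theorem statement4
    (S T : H →L[ℂ] H) (hS : S.IsPositive) (hT : T.IsPositive)
    (hinv : IsUnit (S + T)) :
    (S * Ring.inverse (S + T) * T).IsPositive ∧
    S * Ring.inverse (S + T) * T = T * Ring.inverse (S + T) * S ∧
    ∀ x : H, (inner ℂ ((S * Ring.inverse (S + T) * T) x) x : ℂ).re =
      ⨅ y : H, ((inner ℂ (S (x - y)) (x - y) : ℂ).re + (inner ℂ (T y) y : ℂ).re) := by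
  set A : H →L[ℂ] H := S + T with hAdef
  set B : H →L[ℂ] H := Ring.inverse A with hBdef
  have hA : A.IsPositive := hS.add hT
  have hAB : A * B = 1 := Ring.mul_inverse_cancel A hinv
  have hBA : B * A = 1 := Ring.inverse_mul_cancel A hinv
  have hBsa : IsSelfAdjoint B := by
    have := Ring.inverse_star A
    rw [hA.isSelfAdjoint.star_eq] at this
    exact this.symm
  -- the algebraic identities
  have e1 : S * B * T = T - T * B * T := by
    have h : S * B * T = A * B * T - T * B * T := by rw [hAdef]; noncomm_ring
    rw [h, hAB, one_mul]
  have e2 : T * B * S = T - T * B * T := by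
    have h : T * B * S = T * (B * A) - T * B * T := by rw [hAdef]; noncomm_ring
    rw [h, hBA, mul_one]
  have e3 : S * B * T = S - S * B * S := by
    have h : S * B * T = S * (B * A) - S * B * S := by rw [hAdef]; noncomm_ring
    rw [h, hBA, mul_one]
  have heq : S * B * T = T * B * S := e1.trans e2.symm
  -- self-adjointness of the product
  have hPsa : IsSelfAdjoint (S * B * T) := by
    have : star (S * B * T) = T * (B * S) := by
      rw [star_mul, star_mul, hS.isSelfAdjoint.star_eq, hT.isSelfAdjoint.star_eq,
        hBsa.star_eq]
    rw [IsSelfAdjoint, this, ← mul_assoc]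
    exact heq.symm
  -- symmetry facts
  have symS : ∀ u v : H, (inner ℂ (S u) v : ℂ) = inner ℂ u (S v) := fun u v =>
    hS.isSelfAdjoint.isSymmetric u v
  have symA : ∀ u v : H, (inner ℂ (A u) v : ℂ) = inner ℂ u (A v) := fun u v =>
    hA.isSelfAdjoint.isSymmetric u v
  -- the key identity
  have key : ∀ x y : H,
      (inner ℂ (S (x - y)) (x - y) : ℂ) + inner ℂ (T y) y
        = inner ℂ ((S * B * T) x) x + inner ℂ (A (y - B (S x))) (y - B (S x)) := by
    intro x y
    set y₀ : H := B (S x) with hy₀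
    have hAy₀ : A y₀ = S x := by
      have : (A * B) (S x) = S x := by rw [hAB]; simp
      simpa [mul_apply] using this
    have h1 : (inner ℂ (S (x - y)) (x - y) : ℂ)
        = inner ℂ (S x) x - inner ℂ (S x) y - inner ℂ (S y) x + inner ℂ (S y) y := by
      rw [map_sub, inner_sub_left, inner_sub_right, inner_sub_right]; ring
    have h2 : (inner ℂ (A (y - y₀)) (y - y₀) : ℂ)
        = inner ℂ (A y) y - inner ℂ (A y) y₀ - inner ℂ (A y₀) y + inner ℂ (A y₀) y₀ := by
      rw [map_sub, inner_sub_left, inner_sub_right, inner_sub_right]; ring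
    have hA1 : (inner ℂ (A y) y : ℂ) = inner ℂ (S y) y + inner ℂ (T y) y := by
      rw [hAdef]; simp [inner_add_left]
    have hA2 : (inner ℂ (A y) y₀ : ℂ) = inner ℂ (S y) x := by
      rw [symA, hAy₀, ← symS]
    have hA3 : (inner ℂ (A y₀) y : ℂ) = inner ℂ (S x) y := by rw [hAy₀]
    have hP : (inner ℂ ((S * B * T) x) x : ℂ) = inner ℂ (S x) x - inner ℂ (A y₀) y₀ := by
      have hx : (S * B * T) x = S x - S y₀ := by
        rw [e3]; simp [mul_apply, hy₀]
      rw [hx, inner_sub_left]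
      congr 1
      rw [symS, ← hAy₀, ← symA]
    rw [h1, h2, hA1, hA2, hA3, hP]
    ring
  -- real-part consequences
  have keyRe : ∀ x y : H,
      (inner ℂ (S (x - y)) (x - y) : ℂ).re + (inner ℂ (T y) y : ℂ).re
        = (inner ℂ ((S * B * T) x) x : ℂ).re
          + (inner ℂ (A (y - B (S x))) (y - B (S x)) : ℂ).re := by
    intro x y
    have := congrArg Complex.re (key x y)
    simpa using this
  have hposS : ∀ z : H, 0 ≤ (inner ℂ (S z) z : ℂ).re := fun z => by simpa using (Complex.le_def.mp (hS.inner_nonneg_left z)).1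
  have hposT : ∀ z : H, 0 ≤ (inner ℂ (T z) z : ℂ).re := fun z => by simpa using (Complex.le_def.mp (hT.inner_nonneg_left z)).1
  have hposA : ∀ z : H, 0 ≤ (inner ℂ (A z) z : ℂ).re := fun z => by simpa using (Complex.le_def.mp (hA.inner_nonneg_left z)).1
  -- value at the minimizer
  have hmin : ∀ x : H,
      (inner ℂ (S (x - B (S x))) (x - B (S x)) : ℂ).re + (inner ℂ (T (B (S x))) (B (S x)) : ℂ).re
        = (inner ℂ ((S * B * T) x) x : ℂ).re := by
    intro x
    have := keyRe x (B (S x))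
    simpa using this
  refine ⟨⟨hPsa.isSymmetric, fun x => ?_⟩, heq, fun x => ?_⟩
  · -- positivity
    have h := hmin x
    have : 0 ≤ (inner ℂ ((S * B * T) x) x : ℂ).re := by
      rw [← h]; exact add_nonneg (hposS _) (hposT _)
    simpa [reApplyInnerSelf_apply] using this
  · -- the infimum formula
    have hlb : ∀ y : H, (inner ℂ ((S * B * T) x) x : ℂ).re
        ≤ (inner ℂ (S (x - y)) (x - y) : ℂ).re + (inner ℂ (T y) y : ℂ).re := by
      intro y
      rw [keyRe x y]
      have := hposA (y - B (S x))
      linarith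
    have hbdd : BddBelow (Set.range fun y : H =>
        (inner ℂ (S (x - y)) (x - y) : ℂ).re + (inner ℂ (T y) y : ℂ).re) := by
      refine ⟨(inner ℂ ((S * B * T) x) x : ℂ).re, ?_⟩
      rintro _ ⟨y, rfl⟩
      exact hlb y
    refine le_antisymm (le_ciInf hlb) ?_
    calc (⨅ y : H, ((inner ℂ (S (x - y)) (x - y) : ℂ).re + (inner ℂ (T y) y : ℂ).re))
        ≤ (inner ℂ (S (x - B (S x))) (x - B (S x)) : ℂ).re
            + (inner ℂ (T (B (S x))) (B (S x)) : ℂ).re := ciInf_le hbdd (B (S x))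
      _ = (inner ℂ ((S * B * T) x) x : ℂ).re := hmin x
end

section
/- Let H be a complex Hilbert space, let T be a positive bounded operator with T ≤ I (a positive contraction), and let S be a positive bounded operator commuting with T such that I − T + S is invertible. Then the operator I − T + (I − T + S)^{-1} S² is positive and invertible. -/
open ContinuousLinearMap Filter Topology

variable {H : Type*} [NormedAddCommGroup H] [InnerProductSpace ℂ H] [CompleteSpace H]

private lemma statement5_aux {𝔄 : Type*} [CStarAlgebra 𝔄] [PartialOrder 𝔄] [StarOrderedRing 𝔄]
    (A S : 𝔄) (hA0 : (0 : 𝔄) ≤ A) (hS0 : (0 : 𝔄) ≤ S) (hAS : A * S = S * A)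
    (hinv : IsUnit (A + S)) :
    (0 : 𝔄) ≤ A + Ring.inverse (A + S) * S ^ 2 ∧ IsUnit (A + Ring.inverse (A + S) * S ^ 2) := by
  set U : 𝔄 := A + S with hU_def
  set V : 𝔄 := Ring.inverse U with hV_def
  have hUV : U * V = 1 := Ring.mul_inverse_cancel _ hinv
  have hVU : V * U = 1 := Ring.inverse_mul_cancel _ hinv
  have hUS : U * S = S * U := by rw [hU_def, add_mul, mul_add, hAS]
  have hUA : U * A = A * U := by rw [hU_def, add_mul, mul_add, hAS]
  have hVS : V * S = S * V := by
    have h1 : Commute S (↑hinv.unit) := by rw [hinv.unit_spec]; exact hUS.symm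
    have h2 : Commute S (↑hinv.unit⁻¹) := h1.units_inv_right
    rw [hV_def, ← hinv.unit_spec, Ring.inverse_unit]
    exact h2.symm
  have hU0 : (0 : 𝔄) ≤ U := add_nonneg hA0 hS0
  have hV0 : (0 : 𝔄) ≤ V := by
    have := CFC.inv_nonneg_of_nonneg hinv.unit (by rw [hinv.unit_spec]; exact hU0)
    rwa [hV_def, ← hinv.unit_spec, Ring.inverse_unit]
  have hAsa : IsSelfAdjoint A := .of_nonneg hA0
  have hSsa : IsSelfAdjoint S := .of_nonneg hS0
  have hVS2 : V * S ^ 2 = S * V * S := by rw [sq, ← mul_assoc, hVS]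
  have hSVS : (0 : 𝔄) ≤ S * V * S := hSsa.conjugate_nonneg hV0
  have hAVA : (0 : 𝔄) ≤ A * V * A := hAsa.conjugate_nonneg hV0
  set X : 𝔄 := A + V * S ^ 2 with hX_def
  have hX' : X = A + S * V * S := by rw [hX_def, hVS2]
  have hX0 : (0 : 𝔄) ≤ X := by rw [hX']; exact add_nonneg hA0 hSVS
  refine ⟨hX0, ?_⟩
  have hUsvs : U * (S * V * S) = S * S := by
    rw [← mul_assoc, ← mul_assoc, hUS, mul_assoc S U V, hUV, mul_one]
  have hUava : U * (A * V * A) = A * A := by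
    rw [← mul_assoc, ← mul_assoc, hUA, mul_assoc A U V, hUV, mul_one]
  have key : X + X - U = A * V * A + S * V * S := by
    refine hinv.mul_left_cancel ?_
    have lhs : U * (X + X - U) = A * A + S * S := by
      rw [mul_sub, mul_add, hX', mul_add, hUsvs]
      have h1 : U * A = A * A + S * A := by rw [hUA, hU_def, mul_add, hAS]
      have h2 : U * U = A * A + S * A + (S * A + S * S) := by
        nth_rewrite 2 [hU_def]
        rw [mul_add, h1, hUS, hU_def, mul_add]
      rw [h1, h2]
      abel
    rw [lhs, mul_add, hUsvs, hUava]
  have hUleX2 : U ≤ X + X := by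
    rw [← sub_nonneg, key]
    exact add_nonneg hAVA hSVS
  have hX2 : IsUnit (X + X) := CStarAlgebra.isUnit_of_le U hUleX2 (IsStrictlyPositive.iff_of_unital.mpr ⟨hU0, hinv⟩)
  have h2unit : IsUnit (2 : 𝔄) := by
    have : IsUnit ((2 : ℂ) • (1 : 𝔄)) := isUnit_one.smul (Units.mk0 (2 : ℂ) two_ne_zero)
    simpa [two_smul, one_add_one_eq_two] using this
  rw [← two_mul, ← h2unit.unit_spec, Units.isUnit_units_mul] at hX2
  exact hX2

/-- If `T` is a positive contraction, `S` is positive, commutes with `T`, and `1 - T + S` is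
invertible, then `1 - T + (1 - T + S)⁻¹ S²` is positive and invertible. -/
theorem statement5
    (T : H →L[ℂ] H) (hT : T.IsPositive) (hT1 : T ≤ 1)
    (S : H →L[ℂ] H) (hS : S.IsPositive) (hcomm : S * T = T * S)
    (hinv : IsUnit (1 - T + S)) :
    (1 - T + Ring.inverse (1 - T + S) * S ^ 2).IsPositive ∧
    IsUnit (1 - T + Ring.inverse (1 - T + S) * S ^ 2) := by
  have hAS : (1 - T) * S = S * (1 - T) := by
    rw [sub_mul, mul_sub, one_mul, mul_one, hcomm]
  obtain ⟨h1, h2⟩ := statement5_aux (1 - T) S (sub_nonneg.mpr hT1)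
    ((nonneg_iff_isPositive S).mpr hS) hAS hinv
  exact ⟨(nonneg_iff_isPositive _).mp h1, h2⟩
end

section
/- Let H be a complex Hilbert space and let T be a positive bounded operator with T ≤ I. Then there exists a sequence (S_n) of positive bounded operators, each commuting with T, such that S_0 = T, the operator I − T + S_n is invertible for every n, and S_{n+1} = (I − T + S_n)^{-1} S_n² for every n. Moreover, any such sequence is nonincreasing in the operator order and converges in the strong operator topology to the orthogonal projection onto the fixed-point subspace { x ∈ H : T x = x } (equivalently, onto ker(I − T)). -/
namespace Statement7Aux

noncomputable def f : ℕ → ℝ → ℝ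
  | 0 => fun t => t
  | (n+1) => fun t => (f n t)^2 / (1 - t + f n t)

lemma f_nonneg (n : ℕ) {t : ℝ} (ht : t ∈ Set.Icc (0:ℝ) 1) : 0 ≤ f n t := by
  induction n with
  | zero => exact ht.1
  | succ n ih =>
    exact div_nonneg (sq_nonneg _) (by linarith [ht.2])

lemma f_one (n : ℕ) : f n 1 = 1 := by
  induction n with
  | zero => rfl
  | succ n ih => simp [f, ih]

lemma denom_pos (n : ℕ) {t : ℝ} (ht : t ∈ Set.Icc (0:ℝ) 1) : 0 < 1 - t + f n t := by
  rcases eq_or_lt_of_le ht.2 with h | h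
  · rw [h, f_one]; norm_num
  · linarith [f_nonneg n ht]

lemma f_le_self (n : ℕ) {t : ℝ} (ht : t ∈ Set.Icc (0:ℝ) 1) : f n t ≤ t := by
  induction n with
  | zero => exact le_rfl
  | succ n ih =>
    have hd := denom_pos n ht
    have h0 := f_nonneg n ht
    rw [show f (n+1) t = (f n t)^2 / (1 - t + f n t) from rfl, div_le_iff₀ hd]
    nlinarith [ht.1, ht.2]

lemma f_le_pow (n : ℕ) {t : ℝ} (ht : t ∈ Set.Icc (0:ℝ) 1) : f n t ≤ t ^ (n + 1) := by
  induction n with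
  | zero => show t ≤ t ^ 1; rw [pow_one]
  | succ n ih =>
    have hd := denom_pos n ht
    have h0 := f_nonneg n ht
    have hle := f_le_self n ht
    have key : f (n+1) t ≤ t * f n t := by
      rw [show f (n+1) t = (f n t)^2 / (1 - t + f n t) from rfl, div_le_iff₀ hd]
      nlinarith [mul_nonneg (mul_nonneg (sub_nonneg.mpr ht.2) h0) (sub_nonneg.mpr hle)]
    calc f (n+1) t ≤ t * f n t := key
      _ ≤ t * t ^ (n+1) := by
          exact mul_le_mul_of_nonneg_left ih ht.1
      _ = t ^ (n + 2) := by ring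

lemma f_succ_le (n : ℕ) {t : ℝ} (ht : t ∈ Set.Icc (0:ℝ) 1) : f (n+1) t ≤ f n t := by
  have hd := denom_pos n ht
  have h0 := f_nonneg n ht
  rw [show f (n+1) t = (f n t)^2 / (1 - t + f n t) from rfl, div_le_iff₀ hd]
  nlinarith [ht.2]

lemma f_anti {m n : ℕ} (h : m ≤ n) {t : ℝ} (ht : t ∈ Set.Icc (0:ℝ) 1) : f n t ≤ f m t :=
  antitone_nat_of_succ_le (f := fun k => f k t) (fun k => f_succ_le k ht) h

lemma f_contOn (n : ℕ) : ContinuousOn (f n) (Set.Icc (0:ℝ) 1) := by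
  induction n with
  | zero => exact continuousOn_id
  | succ n ih =>
    show ContinuousOn (fun t => (f n t)^2 / (1 - t + f n t)) _
    exact (ih.pow 2).div (((continuousOn_const.sub continuousOn_id).add ih))
      (fun t ht => (denom_pos n ht).ne')

lemma pow_mul_one_sub_le (n : ℕ) {t : ℝ} (ht : t ∈ Set.Icc (0:ℝ) 1) :
    t ^ n * (1 - t) ≤ 1 / (n + 1) := by
  have h1 : (1 - t) * ∑ i ∈ Finset.range (n+1), t ^ i = 1 - t ^ (n+1) := by
    have := geom_sum_mul t (n+1)
    nlinarith [this]
  have h2 : ((n:ℝ)+1) * t ^ n ≤ ∑ i ∈ Finset.range (n+1), t ^ i := by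
    calc ((n:ℝ)+1) * t ^ n = ∑ _i ∈ Finset.range (n+1), t ^ n := by
          rw [Finset.sum_const, Finset.card_range]; simp
      _ ≤ ∑ i ∈ Finset.range (n+1), t ^ i := by
          refine Finset.sum_le_sum fun i hi => ?_
          exact pow_le_pow_of_le_one ht.1 ht.2 (Nat.le_of_lt_succ (Finset.mem_range.mp hi))
  have h3 : ((n:ℝ)+1) * (t ^ n * (1 - t)) ≤ 1 := by
    have h4 : 0 ≤ t ^ (n+1) := pow_nonneg ht.1 _
    nlinarith [mul_le_mul_of_nonneg_left h2 (sub_nonneg.mpr ht.2)]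
  rw [le_div_iff₀ (by positivity : (0:ℝ) < (n:ℝ)+1)]
  linarith
end Statement7Aux

open ContinuousLinearMap Filter Topology
open scoped InnerProductSpace

variable {H : Type*} [NormedAddCommGroup H] [InnerProductSpace ℂ H] [CompleteSpace H]

open Statement7Aux

/-- For a positive contraction `T` there exists a sequence `(Sₙ)` of positive operators
commuting with `T` with `S₀ = T`, `1 - T + Sₙ` invertible, and
`S_{n+1} = (1 - T + Sₙ)⁻¹ Sₙ²`; moreover any such sequence is nonincreasing in the Loewner
order and converges strongly to the orthogonal projection onto `ker (1 - T)`,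
the fixed-point subspace `{x : T x = x}`. -/
theorem statement7
    (T : H →L[ℂ] H) (hT : T.IsPositive) (hT1 : T ≤ 1) :
    (∃ S : ℕ → H →L[ℂ] H,
      (∀ n, (S n).IsPositive) ∧ (∀ n, S n * T = T * S n) ∧ S 0 = T ∧
      (∀ n, IsUnit (1 - T + S n)) ∧
      (∀ n, S (n + 1) = Ring.inverse (1 - T + S n) * (S n) ^ 2)) ∧
    (∀ S : ℕ → H →L[ℂ] H,
      (∀ n, (S n).IsPositive) → (∀ n, S n * T = T * S n) → S 0 = T →
      (∀ n, IsUnit (1 - T + S n)) →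
      (∀ n, S (n + 1) = Ring.inverse (1 - T + S n) * (S n) ^ 2) →
      (∀ m n, m ≤ n → S n ≤ S m) ∧
      (∀ x : H, Tendsto (fun n => S n x) atTop
        (𝓝 (((LinearMap.ker ((1 - T : H →L[ℂ] H) : H →ₗ[ℂ] H)).subtypeL ∘L
          Submodule.orthogonalProjectionOnto
            (LinearMap.ker ((1 - T : H →L[ℂ] H) : H →ₗ[ℂ] H))) x)))) := by
  have hTsa : IsSelfAdjoint T := hT.isSelfAdjoint
  have hT0 : (0 : H →L[ℂ] H) ≤ T := (nonneg_iff_isPositive T).mpr hT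
  have hone : cfc (fun t : ℝ => 1 - t) T = 1 - T := by
    rw [cfc_sub (fun _ : ℝ => 1) (fun t : ℝ => t) T, cfc_const_one ℝ T hTsa, cfc_id' ℝ T hTsa]
  have hspec : spectrum ℝ T ⊆ Set.Icc (0:ℝ) 1 := by
    intro x hx
    refine ⟨spectrum_nonneg_of_nonneg hT0 hx, ?_⟩
    have h6 : (1:ℝ) - x ∈ spectrum ℝ (1 - T) := by
      rw [← hone, cfc_map_spectrum (R := ℝ) (fun t : ℝ => 1 - t) T hTsa (by fun_prop)]
      exact ⟨x, hx, rfl⟩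
    have := spectrum_nonneg_of_nonneg (sub_nonneg.mpr hT1) h6
    linarith
  have hcont : ∀ n, ContinuousOn (f n) (spectrum ℝ T) := fun n => (f_contOn n).mono hspec
  have hdcont : ∀ n, ContinuousOn (fun t : ℝ => 1 - t + f n t) (spectrum ℝ T) :=
    fun n => (continuousOn_const.sub continuousOn_id).add (hcont n)
  have hne : ∀ n, ∀ x ∈ spectrum ℝ T, (1 - x + f n x) ≠ 0 :=
    fun n x hx => (denom_pos n (hspec hx)).ne'
  set Sn : ℕ → H →L[ℂ] H := fun n => cfc (f n) T with hSn
  have hSpos : ∀ n, (Sn n).IsPositive := fun n =>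
    (nonneg_iff_isPositive _).mp (cfc_nonneg (fun x hx => f_nonneg n (hspec hx)))
  have hScomm : ∀ n, Sn n * T = T * Sn n := by
    intro n
    simp only [hSn]
    have := (cfc_commute_cfc (R := ℝ) (f n) id T).eq
    rwa [cfc_id ℝ T hTsa] at this
  have hS0 : Sn 0 = T := by
    simp only [hSn]
    exact cfc_id' ℝ T hTsa
  have hA : ∀ n, 1 - T + Sn n = cfc (fun t : ℝ => 1 - t + f n t) T := by
    intro n
    simp only [hSn]
    rw [cfc_add (a := T) (fun t : ℝ => 1 - t) (f n) (by fun_prop) (hcont n), hone]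
  have hAunit : ∀ n, IsUnit (1 - T + Sn n) := by
    intro n
    rw [hA n]
    exact isUnit_cfc _ T (hdcont n) hTsa (hne n)
  have hrec : ∀ n, Sn (n + 1) = Ring.inverse (1 - T + Sn n) * (Sn n) ^ 2 := by
    intro n
    have hinv : Ring.inverse (1 - T + Sn n) = cfc (fun t : ℝ => (1 - t + f n t)⁻¹) T := by
      rw [hA n]
      exact (cfc_inv _ T (hne n) (hdcont n) hTsa).symm
    have hsq : (Sn n) ^ 2 = cfc (fun t : ℝ => f n t ^ 2) T := by
      simp only [hSn]
      exact (cfc_pow (f n) 2 T (hcont n) hTsa).symm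
    rw [hinv, hsq, ← cfc_mul (fun t : ℝ => (1 - t + f n t)⁻¹) (fun t : ℝ => f n t ^ 2) T ((hdcont n).inv₀ (hne n)) ((hcont n).pow 2)]
    simp only [hSn]
    refine cfc_congr fun x hx => ?_
    show f (n+1) x = (1 - x + f n x)⁻¹ * f n x ^ 2
    rw [show f (n+1) x = f n x ^ 2 / (1 - x + f n x) from rfl, div_eq_inv_mul]
  refine ⟨⟨Sn, hSpos, hScomm, hS0, hAunit, hrec⟩, ?_⟩
  intro S _ _ hS0' _ hrec'
  have hSeq : S = Sn := by
    funext n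
    induction n with
    | zero => rw [hS0', hS0]
    | succ n ih => rw [hrec' n, ih, hrec n]
  subst hSeq
  constructor
  · intro m n hmn
    simp only [hSn]
    exact cfc_mono (fun x hx => f_anti hmn (hspec hx)) (hcont n) (hcont m)
  · intro x
    set K := LinearMap.ker ((1 - T : H →L[ℂ] H) : H →ₗ[ℂ] H) with hK
    set u : H := (K.subtypeL ∘L Submodule.orthogonalProjectionOnto K) x with hu
    have hu' : u = (Submodule.orthogonalProjectionOnto K x : H) := by
      rw [hu]; rfl
    have humem : u ∈ K := by rw [hu']; exact SetLike.coe_mem _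
    have hvmem : x - u ∈ Kᗮ := by
      rw [hu']; exact K.sub_starProjection_mem_orthogonal x
    have hfix : ∀ n, ∀ y ∈ K, Sn n y = y := by
      intro n
      induction n with
      | zero =>
        intro y hy
        have h1 : (1 - T) y = 0 := LinearMap.mem_ker.mp hy
        have h2 : y - T y = 0 := by simpa [sub_apply, one_apply] using h1
        rw [hS0]
        exact (sub_eq_zero.mp h2).symm
      | succ n ih =>
        intro y hy
        have h1 : (1 - T) y = 0 := LinearMap.mem_ker.mp hy
        have h2 : y - T y = 0 := by simpa [sub_apply, one_apply] using h1
        have hTy : T y = y := (sub_eq_zero.mp h2).symm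
        have hAy : (1 - T + Sn n) y = y := by
          simp [add_apply, sub_apply, one_apply, hTy, ih y hy]
        rw [hrec n]
        have hsqy : (Sn n ^ 2) y = y := by
          rw [sq, ContinuousLinearMap.mul_apply, ih y hy, ih y hy]
        rw [ContinuousLinearMap.mul_apply, hsqy]
        conv_lhs => rw [← hAy]
        rw [← ContinuousLinearMap.mul_apply, Ring.inverse_mul_cancel _ (hAunit n), ContinuousLinearMap.one_apply]
    have hnorm1 : ∀ n, ‖Sn n‖ ≤ 1 := by
      intro n
      simp only [hSn]
      refine norm_cfc_le zero_le_one fun x hx => ?_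
      have h := hspec hx
      rw [Real.norm_eq_abs, abs_of_nonneg (f_nonneg n h)]
      exact le_trans (f_le_self n h) h.2
    have hnorm2 : ∀ n, ‖Sn n * (1 - T)‖ ≤ 1 / (n + 1) := by
      intro n
      have heq : Sn n * (1 - T) = cfc (fun t : ℝ => f n t * (1 - t)) T := by
        simp only [hSn]
        rw [cfc_mul _ _ T (hcont n) (by fun_prop), hone]
      rw [heq]
      refine norm_cfc_le (by positivity) fun x hx => ?_
      have h := hspec hx
      rw [Real.norm_eq_abs, abs_of_nonneg (mul_nonneg (f_nonneg n h) (by linarith [h.2]))]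
      calc f n x * (1 - x) ≤ x ^ (n+1) * (1 - x) :=
            mul_le_mul_of_nonneg_right (f_le_pow n h) (by linarith [h.2])
        _ ≤ x ^ n * (1 - x) :=
            mul_le_mul_of_nonneg_right (pow_le_pow_of_le_one h.1 h.2 (by omega)) (by linarith [h.2])
        _ ≤ 1 / (n + 1) := pow_mul_one_sub_le n h
    have hsa1T : IsSelfAdjoint (1 - T : H →L[ℂ] H) := (IsSelfAdjoint.one (R := H →L[ℂ] H)).sub hTsa
    have horth : Kᗮ = (LinearMap.range ((1 - T : H →L[ℂ] H) : H →ₗ[ℂ] H)).topologicalClosure := by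
      have h1 : (LinearMap.range ((1 - T : H →L[ℂ] H) : H →ₗ[ℂ] H))ᗮ = K := by
        ext z
        rw [Submodule.mem_orthogonal]
        constructor
        · intro h
          have h3 : ⟪(1 - T) ((1 - T) z), z⟫_ℂ = 0 := h _ ⟨(1 - T) z, rfl⟩
          have h4 : ⟪(1 - T) ((1 - T) z), z⟫_ℂ = ⟪(1 - T) z, (1 - T) z⟫_ℂ := by
            nth_rewrite 1 [← hsa1T.adjoint_eq]
            exact ContinuousLinearMap.adjoint_inner_left _ _ _
          rw [h4, inner_self_eq_zero] at h3
          exact LinearMap.mem_ker.mpr h3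
        · intro hz w hw
          obtain ⟨y, rfl⟩ := hw
          have hadj : ⟪(1 - T : H →L[ℂ] H) y, z⟫_ℂ = ⟪y, (1 - T : H →L[ℂ] H) z⟫_ℂ := by
            nth_rewrite 1 [← hsa1T.adjoint_eq]
            exact ContinuousLinearMap.adjoint_inner_left _ _ _
          rw [ContinuousLinearMap.coe_coe, hadj, show (1 - T : H →L[ℂ] H) z = 0 from LinearMap.mem_ker.mp hz, inner_zero_right]
      rw [← h1, Submodule.orthogonal_orthogonal_eq_closure]
    have htend0 : ∀ v ∈ Kᗮ, Tendsto (fun n => Sn n v) atTop (𝓝 0) := by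
      intro v hv
      rw [horth] at hv
      rw [NormedAddCommGroup.tendsto_nhds_zero]
      intro ε hε
      have hv' : v ∈ closure ((LinearMap.range ((1 - T : H →L[ℂ] H) : H →ₗ[ℂ] H) : Submodule ℂ H) : Set H) := hv
      obtain ⟨w, hwmem, hwd⟩ := Metric.mem_closure_iff.mp hv' (ε/2) (by linarith)
      obtain ⟨y, rfl⟩ := hwmem
      have hlim : Tendsto (fun n : ℕ => ‖y‖ / ((n : ℝ) + 1)) atTop (𝓝 0) := by
        have h := (tendsto_const_div_atTop_nhds_zero_nat ‖y‖).comp (tendsto_add_atTop_nat 1)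
        simpa [Function.comp_def] using h
      have hev : ∀ᶠ n : ℕ in atTop, ‖y‖ / ((n : ℝ) + 1) < ε / 2 :=
        hlim.eventually (gt_mem_nhds (by linarith))
      filter_upwards [hev] with n hn
      have hsplit : Sn n v = Sn n (v - (1 - T) y) + Sn n ((1 - T) y) := by
        rw [← map_add]; congr 1; abel
      have hb1 : ‖Sn n (v - (1 - T) y)‖ ≤ ε / 2 := by
        calc ‖Sn n (v - (1 - T) y)‖ ≤ ‖Sn n‖ * ‖v - (1 - T) y‖ := le_opNorm _ _
          _ ≤ 1 * ‖v - (1 - T) y‖ := mul_le_mul_of_nonneg_right (hnorm1 n) (norm_nonneg _)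
          _ ≤ ε / 2 := by
              rw [one_mul, ← dist_eq_norm]
              exact le_of_lt hwd
      have hb2 : ‖Sn n ((1 - T) y)‖ < ε / 2 := by
        calc ‖Sn n ((1 - T) y)‖ = ‖(Sn n * (1 - T)) y‖ := by rw [ContinuousLinearMap.mul_apply]
          _ ≤ ‖Sn n * (1 - T)‖ * ‖y‖ := le_opNorm _ _
          _ ≤ (1 / ((n : ℝ) + 1)) * ‖y‖ := mul_le_mul_of_nonneg_right (hnorm2 n) (norm_nonneg _)
          _ = ‖y‖ / ((n : ℝ) + 1) := by ring
          _ < ε / 2 := hn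
      calc ‖Sn n v‖ ≤ ‖Sn n (v - (1 - T) y)‖ + ‖Sn n ((1 - T) y)‖ := by
            rw [hsplit]; exact norm_add_le _ _
        _ < ε := by linarith
    have hx : ∀ n, Sn n x = u + Sn n (x - u) := by
      intro n
      rw [map_sub, hfix n u humem]
      abel
    have hfin := (htend0 (x - u) hvmem).const_add u
    rw [add_zero] at hfin
    exact hfin.congr fun n => (hx n).symm
end

section
/- Let H be a complex Hilbert space, let T be a positive bounded operator with T ≤ I, and let P be the orthogonal projection onto ker(I − T). For each n ≥ 1 let A_n = g_n(T) be the operator obtained by the continuous functional calculus from the function g_n(t) = min{ t, n(1 − t) } on the spectrum of T. Then each A_n is positive, the sequence (A_n) is nondecreasing in the operator order, A_n ≤ n(I − T) for every n, and (A_n) converges in the strong operator topology to T − P. Consequently, T − P is absolutely continuous with respect to I − T. -/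
open ContinuousLinearMap Filter Topology
open Pointwise
set_option synthInstance.maxHeartbeats 1000000
set_option maxHeartbeats 2000000

variable {H : Type*} [NormedAddCommGroup H] [InnerProductSpace ℂ H] [CompleteSpace H]

lemma aux_symm {C : H →L[ℂ] H} (hC : IsSelfAdjoint C) (x y : H) :
    (inner ℂ (C x) y : ℂ) = inner ℂ x (C y) :=
  (isSelfAdjoint_iff_isSymmetric.mp hC) x y

lemma aux_cs {C : H →L[ℂ] H} (hC : C.IsPositive) (x y : H) :
    ‖(inner ℂ (C x) y : ℂ)‖ ≤
      Real.sqrt (inner ℂ (C x) x : ℂ).re * Real.sqrt (inner ℂ (C y) y : ℂ).re := by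
  have hC0 : (0 : H →L[ℂ] H) ≤ C := (nonneg_iff_isPositive C).mpr hC
  set R := CFC.sqrt C with hR
  have hR0 : (0 : H →L[ℂ] H) ≤ R := CFC.sqrt_nonneg (a := C)
  have hRsa : IsSelfAdjoint R := ((nonneg_iff_isPositive R).mp hR0).isSelfAdjoint
  have hRR : R * R = C := CFC.sqrt_mul_sqrt_self C hC0
  have key : ∀ z w : H, (inner ℂ (C z) w : ℂ) = inner ℂ (R z) (R w) := by
    intro z w
    rw [← hRR, ContinuousLinearMap.mul_apply, aux_symm hRsa]
  have hnorm : ∀ z : H, Real.sqrt (inner ℂ (C z) z : ℂ).re = ‖R z‖ := by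
    intro z
    rw [key z z]
    rw [show (inner ℂ (R z) (R z) : ℂ).re = ‖R z‖ ^ 2 from by
      rw [← RCLike.re_to_complex, inner_self_eq_norm_sq], Real.sqrt_sq (norm_nonneg _)]
  rw [key, hnorm, hnorm]
  exact norm_inner_le_norm _ _

lemma aux_re_nonneg {C : H →L[ℂ] H} (hC : C.IsPositive) (x : H) :
    0 ≤ (inner ℂ (C x) x : ℂ).re := by
  have := hC.inner_nonneg_left x
  simpa using hC.re_inner_nonneg_left x

lemma aux_normsq {C : H →L[ℂ] H} (hC : C.IsPositive) (x : H) :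
    ‖C x‖ ^ 2 ≤ ‖C‖ * (inner ℂ (C x) x : ℂ).re := by
  rcases eq_or_ne (C x) 0 with h | h
  · have : 0 ≤ ‖C‖ * (inner ℂ (C x) x : ℂ).re :=
      mul_nonneg (norm_nonneg _) (aux_re_nonneg hC x)
    simpa [h] using this
  · have h1 := aux_cs hC x (C x)
    have h2 : ‖(inner ℂ (C x) (C x) : ℂ)‖ = ‖C x‖ ^ 2 := by
      rw [inner_self_eq_norm_sq_to_K]
      simp
    have h3 : (inner ℂ (C (C x)) (C x) : ℂ).re ≤ ‖C‖ * ‖C x‖ ^ 2 := by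
      calc (inner ℂ (C (C x)) (C x) : ℂ).re ≤ ‖(inner ℂ (C (C x)) (C x) : ℂ)‖ :=
            Complex.re_le_norm _
        _ ≤ ‖C (C x)‖ * ‖C x‖ := norm_inner_le_norm _ _
        _ ≤ (‖C‖ * ‖C x‖) * ‖C x‖ := by gcongr; exact le_opNorm C (C x)
        _ = ‖C‖ * ‖C x‖ ^ 2 := by ring
    have h4 : Real.sqrt ((inner ℂ (C (C x)) (C x) : ℂ).re) ≤
        Real.sqrt ‖C‖ * ‖C x‖ := by
      calc Real.sqrt ((inner ℂ (C (C x)) (C x) : ℂ).re) ≤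
          Real.sqrt (‖C‖ * ‖C x‖ ^ 2) := Real.sqrt_le_sqrt h3
        _ = Real.sqrt ‖C‖ * ‖C x‖ := by
            rw [Real.sqrt_mul (norm_nonneg _), Real.sqrt_sq (norm_nonneg _)]
    have h5 : ‖C x‖ ^ 2 ≤ Real.sqrt ((inner ℂ (C x) x : ℂ).re) *
        (Real.sqrt ‖C‖ * ‖C x‖) := by
      rw [← h2]
      refine h1.trans ?_
      gcongr
    have hx : (0:ℝ) < ‖C x‖ := norm_pos_iff.mpr h
    have h6 : ‖C x‖ ≤ Real.sqrt ((inner ℂ (C x) x : ℂ).re) * Real.sqrt ‖C‖ := by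
      have := h5
      rw [sq] at this
      calc ‖C x‖ = ‖C x‖ * ‖C x‖ / ‖C x‖ := by field_simp
        _ ≤ (Real.sqrt ((inner ℂ (C x) x : ℂ).re) * (Real.sqrt ‖C‖ * ‖C x‖)) / ‖C x‖ := by
            gcongr
        _ = Real.sqrt ((inner ℂ (C x) x : ℂ).re) * Real.sqrt ‖C‖ := by field_simp
    calc ‖C x‖ ^ 2 ≤ (Real.sqrt ((inner ℂ (C x) x : ℂ).re) * Real.sqrt ‖C‖) ^ 2 := by
          have h7 : (0:ℝ) ≤ ‖C x‖ := hx.le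
          nlinarith
      _ = (inner ℂ (C x) x : ℂ).re * ‖C‖ := by
          rw [mul_pow, Real.sq_sqrt (aux_re_nonneg hC x), Real.sq_sqrt (norm_nonneg _)]
      _ = ‖C‖ * (inner ℂ (C x) x : ℂ).re := by ring

lemma aux_le_inner {C D : H →L[ℂ] H} (h : C ≤ D) (x : H) :
    (inner ℂ (C x) x : ℂ).re ≤ (inner ℂ (D x) x : ℂ).re := by
  have hpos : (D - C).IsPositive := (le_def C D).mp h
  have := aux_re_nonneg hpos x
  rw [sub_apply, inner_sub_left] at this
  simp only [Complex.sub_re] at this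
  linarith

lemma aux_tri {B : H →L[ℂ] H} (hB : B.IsPositive) (x y : H) :
    Real.sqrt ((inner ℂ (B (x + y)) (x + y) : ℂ).re) ≤
      Real.sqrt ((inner ℂ (B x) x : ℂ).re) + Real.sqrt ((inner ℂ (B y) y : ℂ).re) := by
  set bx := (inner ℂ (B x) x : ℂ).re
  set by' := (inner ℂ (B y) y : ℂ).re
  have hbx : 0 ≤ bx := aux_re_nonneg hB x
  have hby : 0 ≤ by' := aux_re_nonneg hB y
  have hxy : (inner ℂ (B (x + y)) (x + y) : ℂ).re ≤
      (Real.sqrt bx + Real.sqrt by') ^ 2 := by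
    have e1 : (inner ℂ (B (x + y)) (x + y) : ℂ).re =
        bx + (inner ℂ (B x) y : ℂ).re + (inner ℂ (B y) x : ℂ).re + by' := by
      rw [map_add, inner_add_left, inner_add_right, inner_add_right]
      simp only [Complex.add_re]
      ring
    have c1 : (inner ℂ (B x) y : ℂ).re ≤ Real.sqrt bx * Real.sqrt by' :=
      (Complex.re_le_norm _).trans (aux_cs hB x y)
    have c2 : (inner ℂ (B y) x : ℂ).re ≤ Real.sqrt by' * Real.sqrt bx :=
      (Complex.re_le_norm _).trans (aux_cs hB y x)
    have s1 : Real.sqrt bx ^ 2 = bx := Real.sq_sqrt hbx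
    have s2 : Real.sqrt by' ^ 2 = by' := Real.sq_sqrt hby
    nlinarith
  calc Real.sqrt ((inner ℂ (B (x + y)) (x + y) : ℂ).re) ≤
      Real.sqrt ((Real.sqrt bx + Real.sqrt by') ^ 2) := Real.sqrt_le_sqrt hxy
    _ = Real.sqrt bx + Real.sqrt by' := Real.sqrt_sq (by positivity)

lemma real_min_eq (n : ℕ) (t : ℝ) :
    min t ((n:ℝ) * (1 - t)) = t - max 0 (((n:ℝ)+1) * t - n) := by
  rcases le_total t ((n:ℝ) * (1-t)) with hle | hle
  · rw [min_eq_left hle, max_eq_left (by linarith), sub_zero]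
  · rw [min_eq_right hle, max_eq_right (by linarith)]; ring

lemma real_one_sub_max (n : ℕ) (t : ℝ) :
    min 1 (((n:ℝ)+1) * (1 - t)) = 1 - max 0 (((n:ℝ)+1) * t - n) := by
  rcases le_total (((n:ℝ)+1) * t - n) 0 with hle | hle
  · rw [max_eq_left hle, min_eq_left (by nlinarith), sub_zero]
  · rw [max_eq_right hle, min_eq_right (by nlinarith)]; ring



/-- Let `T` be a positive contraction, `P` the orthogonal projection onto `ker (1 - T)`,
and `Aₙ = gₙ(T)` via the continuous functional calculus, where `gₙ(t) = min (t, n(1 - t))`.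
Then each `Aₙ` is positive, `(Aₙ)_{n ≥ 1}` is nondecreasing, `Aₙ ≤ n (1 - T)`, and `Aₙ → T - P`
strongly; consequently `T - P` is absolutely continuous with respect to `1 - T`. -/
theorem statement12
    (T : H →L[ℂ] H) (hT : T.IsPositive) (hT1 : T ≤ 1)
    (P : H →L[ℂ] H)
    (hP : P = (LinearMap.ker ((1 : H →L[ℂ] H) - T).toLinearMap).subtypeL ∘L
      Submodule.orthogonalProjectionOnto (LinearMap.ker ((1 : H →L[ℂ] H) - T).toLinearMap))
    (An : ℕ → H →L[ℂ] H)
    (hAn : ∀ n : ℕ, An n = cfc (fun t : ℝ => min t ((n : ℝ) * (1 - t))) T) :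
    (∀ n : ℕ, 1 ≤ n → (An n).IsPositive) ∧
    (∀ m n : ℕ, 1 ≤ m → m ≤ n → An m ≤ An n) ∧
    (∀ n : ℕ, 1 ≤ n → An n ≤ n • (1 - T)) ∧
    (∀ x : H, Tendsto (fun n => An n x) atTop (𝓝 ((T - P) x))) ∧
    AbsCont (T - P) (1 - T) := by
  have hT0 : (0 : H →L[ℂ] H) ≤ T := (nonneg_iff_isPositive T).mpr hT
  have hsa : IsSelfAdjoint T := hT.isSelfAdjoint
  -- spectrum in [0,1]
  have hspec : spectrum ℝ T ⊆ Set.Icc 0 1 := by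
    intro t ht
    constructor
    · exact spectrum_nonneg_of_nonneg hT0 ht
    · have h1T : (0 : H →L[ℂ] H) ≤ 1 - T := sub_nonneg.mpr hT1
      have hmem : (1 : ℝ) - t ∈ spectrum ℝ ((1 : H →L[ℂ] H) - T) := by
        have hm : (1 : ℝ) - t ∈ ({1} : Set ℝ) - spectrum ℝ T :=
          Set.sub_mem_sub rfl ht
        rw [spectrum.singleton_sub_eq] at hm
        rwa [map_one] at hm
      linarith [spectrum_nonneg_of_nonneg h1T hmem]
  set K := LinearMap.ker ((1 : H →L[ℂ] H) - T).toLinearMap with hK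
  -- the functions
  set h : ℕ → ℝ → ℝ := fun n t => max 0 (((n:ℝ)+1) * t - n) with hh
  set q : ℕ → H →L[ℂ] H := fun n => cfc (h n) T with hq
  have hcont : ∀ n : ℕ, ContinuousOn (h n) (spectrum ℝ T) := fun n => by fun_prop
  -- An n = T - q n
  have hAq : ∀ n : ℕ, An n = T - q n := by
    intro n
    rw [hAn n]
    simp only [hq]
    rw [show (fun t : ℝ => min t ((n : ℝ) * (1 - t)))
        = fun t : ℝ => t - h n t from funext fun t => real_min_eq n t]
    rw [cfc_sub _ _ T (by fun_prop) (by fun_prop), cfc_id' ℝ T]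
  -- q n is positive
  have hq_nonneg : ∀ n : ℕ, (0 : H →L[ℂ] H) ≤ q n := fun n =>
    cfc_nonneg fun t _ => le_max_left _ _
  have hq_pos : ∀ n : ℕ, (q n).IsPositive := fun n =>
    (nonneg_iff_isPositive _).mp (hq_nonneg n)
  -- h n bounded by 1 on spectrum
  have hh_le_one : ∀ n : ℕ, ∀ t ∈ spectrum ℝ T, h n t ≤ 1 := by
    intro n t ht
    obtain ⟨ht0, ht1⟩ := hspec ht
    show max 0 (((n:ℝ)+1) * t - n) ≤ 1
    apply max_le zero_le_one
    nlinarith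
  have hh_nonneg : ∀ n : ℕ, ∀ t : ℝ, 0 ≤ h n t := fun n t => le_max_left _ _
  -- h antitone in n on spectrum
  have hh_anti : ∀ m n : ℕ, m ≤ n → ∀ t ∈ spectrum ℝ T, h n t ≤ h m t := by
    intro m n hmn t ht
    obtain ⟨ht0, ht1⟩ := hspec ht
    show max 0 (((n:ℝ)+1) * t - n) ≤ max 0 (((m:ℝ)+1) * t - m)
    apply max_le (le_max_left _ _)
    have : ((n:ℝ)+1) * t - n ≤ ((m:ℝ)+1) * t - m := by
      have hc : (m:ℝ) ≤ n := Nat.cast_le.mpr hmn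
      nlinarith
    exact le_trans this (le_max_right _ _)
  have hq_anti : ∀ m n : ℕ, m ≤ n → q n ≤ q m := fun m n hmn =>
    cfc_mono (hh_anti m n hmn) (hcont n) (hcont m)
  -- norm of difference bound
  have hq_diff_norm : ∀ m n : ℕ, m ≤ n → ‖q m - q n‖ ≤ 1 := by
    intro m n hmn
    simp only [hq]
    rw [← cfc_sub _ _ T (hcont m) (hcont n)]
    apply norm_cfc_le zero_le_one
    intro t ht
    rw [Real.norm_eq_abs, abs_of_nonneg (by linarith [hh_anti m n hmn t ht])]
    linarith [hh_le_one m t ht, hh_nonneg n t]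
  -- q n acts as identity on K
  have hqK : ∀ n : ℕ, ∀ w ∈ K, q n w = w := by
    intro n w hw
    have hw0 : ((1 : H →L[ℂ] H) - T) w = 0 := hw
    have hone : (1 : H →L[ℂ] H) - q n
        = cfc (fun t : ℝ => min 1 (((n:ℝ)+1) * (1 - t))) T := by
      simp only [hq]
      rw [show (fun t : ℝ => min 1 (((n:ℝ)+1) * (1 - t)))
          = fun t : ℝ => 1 - h n t from funext fun t => real_one_sub_max n t]
      rw [cfc_sub _ _ T (by fun_prop) (hcont n), cfc_const_one ℝ T]
    have hone_nonneg : (0 : H →L[ℂ] H) ≤ 1 - q n := by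
      rw [hone]
      apply cfc_nonneg
      intro t ht
      obtain ⟨ht0, ht1⟩ := hspec ht
      apply le_min zero_le_one
      nlinarith
    have hone_le : (1 : H →L[ℂ] H) - q n ≤ ((n:ℝ)+1) • ((1 : H →L[ℂ] H) - T) := by
      rw [hone]
      have hrhs : ((n:ℝ)+1) • ((1 : H →L[ℂ] H) - T)
          = cfc (fun t : ℝ => ((n:ℝ)+1) * (1 - t)) T := by
        rw [cfc_const_mul _ _ T (by fun_prop),
          cfc_sub _ _ T (by fun_prop) (by fun_prop), cfc_const_one ℝ T, cfc_id' ℝ T]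
      rw [hrhs]
      exact cfc_mono (fun t ht => min_le_right _ _) (by fun_prop) (by fun_prop)
    have hz : (inner ℂ (((1 : H →L[ℂ] H) - q n) w) w : ℂ).re = 0 := by
      have hle := aux_le_inner hone_le w
      have : (((n:ℝ)+1) • ((1 : H →L[ℂ] H) - T)) w = 0 := by
        rw [smul_apply, hw0, smul_zero]
      rw [this] at hle
      simp only [inner_zero_left, Complex.zero_re] at hle
      have hge := aux_re_nonneg ((nonneg_iff_isPositive _).mp hone_nonneg) w
      linarith
    have := aux_normsq ((nonneg_iff_isPositive _).mp hone_nonneg) w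
    rw [hz, mul_zero] at this
    have hzero : ((1 : H →L[ℂ] H) - q n) w = 0 := by
      have := pow_eq_zero_iff (n := 2) (by norm_num) |>.mp (le_antisymm this (by positivity))
      exact norm_eq_zero.mp this
    have : w - q n w = 0 := by simpa [sub_apply] using hzero
    exact (sub_eq_zero.mp this).symm
  -- selfadjointness
  have hq_sa : ∀ n : ℕ, IsSelfAdjoint (q n) := fun n => (hq_pos n).isSelfAdjoint
  have hsymm : ∀ (C : H →L[ℂ] H), IsSelfAdjoint C → ∀ x y : H,
      (inner ℂ (C x) y : ℂ) = inner ℂ x (C y) := fun C hC x y =>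
    (isSelfAdjoint_iff_isSymmetric.mp hC) x y
  -- q n preserves Kᗮ
  have hqKp : ∀ n : ℕ, ∀ v ∈ Kᗮ, q n v ∈ Kᗮ := by
    intro n v hv
    rw [Submodule.mem_orthogonal]
    intro u hu
    rw [← hsymm (q n) (hq_sa n) u v, hqK n u hu]
    exact (Submodule.mem_orthogonal K v).mp hv u hu
  have hcfc_one_sub : cfc (fun t : ℝ => 1 - t) T = 1 - T := by
    rw [cfc_sub _ _ T (by fun_prop) (by fun_prop), cfc_const_one ℝ T, cfc_id' ℝ T]
  -- membership facts for the projection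
  have hPmem : ∀ x : H, P x ∈ K := by
    intro x; rw [hP]; exact SetLike.coe_mem _
  have hPperp : ∀ x : H, x - P x ∈ Kᗮ := by
    intro x; rw [hP]; exact K.sub_starProjection_mem_orthogonal x
  have hPsa : IsSelfAdjoint P := by
    rw [hP]; exact isSelfAdjoint_starProjection K
  -- strong convergence q n x → P x
  have key4 : ∀ x : H, Tendsto (fun n => q n x) atTop (𝓝 (P x)) := by
    intro x
    set u := P x with hu
    set v := x - P x with hv
    have huK : u ∈ K := hPmem x
    have hvK : v ∈ Kᗮ := hPperp x
    set a : ℕ → ℝ := fun n => (inner ℂ (q n v) v : ℂ).re with ha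
    have ha_nonneg : ∀ n, 0 ≤ a n := fun n => aux_re_nonneg (hq_pos n) v
    have ha_anti : Antitone a := fun m n hmn => aux_le_inner (hq_anti m n hmn) v
    have ha_tend : Tendsto a atTop (𝓝 (⨅ n, a n)) :=
      tendsto_atTop_ciInf ha_anti ⟨0, by rintro r ⟨n, rfl⟩; exact ha_nonneg n⟩
    have ha_cauchy : CauchySeq a := ha_tend.cauchySeq
    have hqv_cauchy : CauchySeq (fun n => q n v) := by
      rw [Metric.cauchySeq_iff]
      intro ε hε
      obtain ⟨N, hN⟩ := Metric.cauchySeq_iff.mp ha_cauchy (ε ^ 2) (by positivity)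
      refine ⟨N, fun m hm n hn => ?_⟩
      have key : ∀ m' n' : ℕ, m' ≤ n' → dist (a m') (a n') < ε ^ 2 →
          dist (q m' v) (q n' v) < ε := by
        intro m' n' hmn hd
        have hCpos : (q m' - q n').IsPositive :=
          (nonneg_iff_isPositive _).mp (sub_nonneg.mpr (hq_anti m' n' hmn))
        have h1 : ‖(q m' - q n') v‖ ^ 2 ≤ ‖q m' - q n'‖ * ((inner ℂ ((q m' - q n') v) v : ℂ).re) :=
          aux_normsq hCpos v
        have h2 : (inner ℂ ((q m' - q n') v) v : ℂ).re = a m' - a n' := by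
          rw [sub_apply, inner_sub_left]
          simp [ha]
        have h3 : a m' - a n' < ε ^ 2 := by
          have := hd
          rw [Real.dist_eq] at this
          have := le_abs_self (a m' - a n')
          linarith [abs_lt.mp (Real.dist_eq (a m') (a n') ▸ hd)]
        have h4 : ‖(q m' - q n') v‖ ^ 2 < ε ^ 2 := by
          have hn1 := hq_diff_norm m' n' hmn
          have hge : 0 ≤ (inner ℂ ((q m' - q n') v) v : ℂ).re := aux_re_nonneg hCpos v
          nlinarith [norm_nonneg (q m' - q n')]
        have : dist (q m' v) (q n' v) = ‖(q m' - q n') v‖ := by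
          rw [dist_eq_norm, sub_apply]
        rw [this]
        exact lt_of_pow_lt_pow_left₀ 2 hε.le h4
      rcases le_total m n with hmn | hmn
      · exact key m n hmn (hN m hm n hn)
      · rw [dist_comm]
        exact key n m hmn (hN n hn m hm)
    obtain ⟨w, hw⟩ := cauchySeq_tendsto_of_complete hqv_cauchy
    have hwperp : w ∈ Kᗮ :=
      (Submodule.isClosed_orthogonal K).mem_of_tendsto hw
        (Filter.Eventually.of_forall fun n => hqKp n v hvK)
    have hw0 : ((1 : H →L[ℂ] H) - T) w = 0 := by
      have h1 : Tendsto (fun n => ((1 : H →L[ℂ] H) - T) (q n v)) atTop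
          (𝓝 (((1 : H →L[ℂ] H) - T) w)) :=
        (((1 : H →L[ℂ] H) - T).continuous.tendsto w).comp hw
      have hb : ∀ n : ℕ, ‖((1 : H →L[ℂ] H) - T) (q n v)‖ ≤ ‖v‖ * (1 / ((n : ℝ) + 1)) := by
        intro n
        have hmul : ((1 : H →L[ℂ] H) - T) * q n
            = cfc (fun t : ℝ => (1 - t) * h n t) T := by
          rw [cfc_mul _ _ T (by fun_prop) (hcont n), hcfc_one_sub]
        have hnorm : ‖((1 : H →L[ℂ] H) - T) * q n‖ ≤ 1 / ((n : ℝ) + 1) := by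
          rw [hmul]
          apply norm_cfc_le (by positivity)
          intro t ht
          obtain ⟨ht0, ht1⟩ := hspec ht
          rw [Real.norm_eq_abs]
          rcases le_total (((n:ℝ)+1) * t - n) 0 with hle | hle
          · have : h n t = 0 := max_eq_left hle
            rw [this, mul_zero, abs_zero]
            positivity
          · have hhnt : h n t = ((n:ℝ)+1) * t - n := max_eq_right hle
            rw [hhnt, abs_of_nonneg (by nlinarith)]
            have hpos : (0:ℝ) < (n:ℝ) + 1 := by positivity
            have h1t : 1 - t ≤ 1 / ((n:ℝ)+1) := by
              rw [le_div_iff₀ hpos]; nlinarith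
            have h2t : ((n:ℝ)+1) * t - n ≤ 1 := by nlinarith
            calc (1 - t) * (((n:ℝ)+1) * t - n) ≤ (1 / ((n:ℝ)+1)) * 1 :=
                  mul_le_mul h1t h2t (by linarith) (by positivity)
              _ = 1 / ((n:ℝ)+1) := mul_one _
        calc ‖((1 : H →L[ℂ] H) - T) (q n v)‖
            = ‖(((1 : H →L[ℂ] H) - T) * q n) v‖ := by rw [ContinuousLinearMap.mul_apply]
          _ ≤ ‖((1 : H →L[ℂ] H) - T) * q n‖ * ‖v‖ := le_opNorm _ _
          _ ≤ (1 / ((n : ℝ) + 1)) * ‖v‖ := by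
              apply mul_le_mul_of_nonneg_right hnorm (norm_nonneg _)
          _ = ‖v‖ * (1 / ((n : ℝ) + 1)) := by ring
      have h2 : Tendsto (fun n => ((1 : H →L[ℂ] H) - T) (q n v)) atTop (𝓝 0) := by
        apply squeeze_zero_norm hb
        have := tendsto_one_div_add_atTop_nhds_zero_nat.const_mul ‖v‖
        simpa using this
      have := tendsto_nhds_unique h1 h2
      exact this
    have hwK : w ∈ K := LinearMap.mem_ker.mpr hw0
    have hw_zero : w = 0 :=
      inner_self_eq_zero.mp ((Submodule.mem_orthogonal K w).mp hwperp w hwK)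
    have hx_eq : ∀ n, q n x = u + q n v := by
      intro n
      have hxuv : x = u + v := by rw [hu, hv]; abel
      conv_lhs => rw [hxuv]
      rw [map_add, hqK n u huK]
    have : Tendsto (fun n => u + q n v) atTop (𝓝 (u + 0)) :=
      tendsto_const_nhds.add (hw_zero ▸ hw)
    rw [add_zero] at this
    simpa only [← hx_eq] using this
  -- the five statements
  have part1 : ∀ n : ℕ, 1 ≤ n → (An n).IsPositive := by
    intro n _
    rw [hAn n]
    apply (nonneg_iff_isPositive _).mp
    apply cfc_nonneg
    intro t ht
    obtain ⟨ht0, ht1⟩ := hspec ht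
    exact le_min ht0 (by nlinarith [Nat.cast_nonneg (α := ℝ) n])
  have part2 : ∀ m n : ℕ, 1 ≤ m → m ≤ n → An m ≤ An n := by
    intro m n _ hmn
    rw [hAn m, hAn n]
    apply cfc_mono _ (by fun_prop) (by fun_prop)
    intro t ht
    obtain ⟨ht0, ht1⟩ := hspec ht
    have hc : (m:ℝ) ≤ n := Nat.cast_le.mpr hmn
    exact min_le_min le_rfl (by nlinarith)
  have part3 : ∀ n : ℕ, 1 ≤ n → An n ≤ n • ((1 : H →L[ℂ] H) - T) := by
    intro n _
    rw [hAn n]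
    have hrhs : (n : ℕ) • ((1 : H →L[ℂ] H) - T)
        = cfc (fun t : ℝ => (n:ℝ) * (1 - t)) T := by
      rw [cfc_const_mul _ _ T (by fun_prop), hcfc_one_sub, Nat.cast_smul_eq_nsmul]
    rw [hrhs]
    exact cfc_mono (fun t ht => min_le_right _ _) (by fun_prop) (by fun_prop)
  have part4 : ∀ x : H, Tendsto (fun n => An n x) atTop (𝓝 ((T - P) x)) := by
    intro x
    have : Tendsto (fun n => T x - q n x) atTop (𝓝 (T x - P x)) :=
      tendsto_const_nhds.sub (key4 x)
    simp only [sub_apply]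
    convert this using 2 with n
    rw [hAq n, sub_apply]
  -- P ≤ q n
  have hqP : ∀ n : ℕ, P ≤ q n := by
    intro n
    have hsa' : IsSelfAdjoint (q n - P) := (hq_sa n).sub hPsa
    have hre : ∀ y, 0 ≤ (q n - P).reApplyInnerSelf y := by
      intro y
      rw [reApplyInnerSelf_apply]
      set u := P y with hu
      set v := y - P y with hv
      have hxuv : y = u + v := by rw [hu, hv]; abel
      have hqy : (q n - P) y = q n v := by
        rw [sub_apply]
        have hq1 : q n y = u + q n v := by
          conv_lhs => rw [hxuv]
          rw [map_add, hqK n u (hPmem y)]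
        rw [hq1, ← hu]
        abel
      rw [hqy]
      rw [show y = u + v from hxuv, inner_add_right]
      have h1 : (inner ℂ (q n v) u : ℂ) = 0 :=
        Submodule.inner_left_of_mem_orthogonal (hPmem y) (hqKp n v (hPperp y))
      rw [h1, zero_add]
      simpa using aux_re_nonneg (hq_pos n) v
    exact (ContinuousLinearMap.le_def _ _).mpr (And.intro (isSelfAdjoint_iff_isSymmetric.mp hsa') hre)
  have hAnB : ∀ n : ℕ, An n ≤ T - P := by
    intro n
    rw [ContinuousLinearMap.le_def]
    have heq : (T - P) - An n = q n - P := by rw [hAq n]; abel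
    rw [heq]
    exact (ContinuousLinearMap.le_def _ _).mp (hqP n)
  have hB_pos : (T - P).IsPositive := by
    have h0 : (0 : H →L[ℂ] H) ≤ An 1 := (nonneg_iff_isPositive _).mpr (part1 1 le_rfl)
    exact (nonneg_iff_isPositive _).mp (h0.trans (hAnB 1))

  have hweak : ∀ y : H, Tendsto (fun n => (inner ℂ (An n y) y : ℂ).re) atTop
      (𝓝 ((inner ℂ ((T - P) y) y : ℂ).re)) := by
    intro y
    have h1 : Tendsto (fun n => (inner ℂ (An n y) y : ℂ)) atTop
        (𝓝 (inner ℂ ((T - P) y) y)) := (part4 y).inner tendsto_const_nhds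
    exact (Complex.continuous_re.tendsto _).comp h1
  refine ⟨part1, part2, part3, part4, ?_⟩
  intro xs hA0 hBC
  set b : ℕ → ℝ := fun k => (inner ℂ ((T - P) (xs k)) (xs k) : ℂ).re with hbdef
  set d : ℕ → ℕ → ℝ :=
    fun k l => (inner ℂ ((T - P) (xs k - xs l)) (xs k - xs l) : ℂ).re with hddef
  have hb_nonneg : ∀ k, 0 ≤ b k := fun k => aux_re_nonneg hB_pos (xs k)
  have hd_nonneg : ∀ k l, 0 ≤ d k l := fun k l => aux_re_nonneg hB_pos _
  set s : ℕ → ℝ := fun k => Real.sqrt (b k) with hsdef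
  have hs_nonneg : ∀ k, 0 ≤ s k := fun k => Real.sqrt_nonneg _
  have hd_symm : ∀ k l, d l k = d k l := by
    intro k l
    simp only [hddef]
    rw [show xs l - xs k = -(xs k - xs l) from by abel, map_neg, inner_neg_neg]
  have htri : ∀ k l, |s k - s l| ≤ Real.sqrt (d k l) := by
    intro k l
    rw [abs_sub_le_iff]
    constructor
    · have := aux_tri hB_pos (xs k - xs l) (xs l)
      rw [sub_add_cancel] at this
      rw [hsdef]
      simp only [hbdef, hddef] at this ⊢
      linarith
    · have := aux_tri hB_pos (xs l - xs k) (xs k)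
      rw [sub_add_cancel] at this
      have hsym := hd_symm k l
      rw [hsdef]
      simp only [hbdef, hddef] at this hsym ⊢
      rw [hsym] at this
      linarith
  have hBCN : ∀ ε > (0:ℝ), ∃ N : ℕ, ∀ k ≥ N, ∀ l ≥ N, d k l < ε := by
    intro ε hε
    have hBC' := Metric.tendsto_nhds.mp hBC ε hε
    rw [prod_atTop_atTop_eq] at hBC'
    obtain ⟨N, hN⟩ := eventually_atTop.mp hBC'
    refine ⟨max N.1 N.2, fun k hk l hl => ?_⟩
    have := hN (k, l) ⟨le_trans (le_max_left _ _) hk, le_trans (le_max_right _ _) hl⟩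
    rw [Real.dist_eq, sub_zero] at this
    exact lt_of_le_of_lt (le_abs_self _) this
  have hs_cauchy : CauchySeq s := by
    rw [Metric.cauchySeq_iff]
    intro ε hε
    obtain ⟨N, hN⟩ := hBCN (ε ^ 2) (by positivity)
    refine ⟨N, fun k hk l hl => ?_⟩
    rw [Real.dist_eq]
    calc |s k - s l| ≤ Real.sqrt (d k l) := htri k l
      _ < ε := (Real.sqrt_lt' hε).mpr (hN k hk l hl)
  obtain ⟨β, hβ⟩ := cauchySeq_tendsto_of_complete hs_cauchy
  obtain ⟨M', hM'⟩ := hβ.bddAbove_range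
  set M := max M' 0 with hM
  have hM0 : 0 ≤ M := le_max_right _ _
  have hsM : ∀ k, s k ≤ M :=
    fun k => le_trans (hM' (Set.mem_range_self k)) (le_max_left _ _)
  have hbM : ∀ k, b k ≤ M ^ 2 := by
    intro k
    have : b k = s k ^ 2 := (Real.sq_sqrt (hb_nonneg k)).symm
    rw [this]
    exact pow_le_pow_left₀ (hs_nonneg k) (hsM k) 2
  have hb_tend : Tendsto b atTop (𝓝 (β * β)) := by
    have : (fun k => s k * s k) = b := funext fun k => Real.mul_self_sqrt (hb_nonneg k)
    rw [← this]
    exact hβ.mul hβ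
  have key : ∀ δ > (0:ℝ), β * β ≤ M * δ + 0 * M + M * δ := by
    intro δ hδ
    obtain ⟨N, hN⟩ := hBCN (δ ^ 2) (by positivity)
    have hev : ∀ᶠ n in atTop,
        b N - (inner ℂ (An n (xs N)) (xs N) : ℂ).re < δ ^ 2 := by
      refine (Metric.tendsto_nhds.mp (hweak (xs N)) (δ ^ 2) (by positivity)).mono
        fun n hn => ?_
      rw [Real.dist_eq] at hn
      have := (abs_lt.mp hn).1
      simp only [hbdef]
      linarith
    obtain ⟨n, hn1, hnδ⟩ := ((eventually_ge_atTop 1).and hev).exists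
    have hAn_pos := part1 n hn1
    have hAnB' := hAnB n
    have hAnnA := part3 n hn1
    have hBAn_pos : ((T - P) - An n).IsPositive :=
      (ContinuousLinearMap.le_def _ _).mp hAnB'
    -- bounds on the three sqrt factors
    have hf2 : Real.sqrt ((inner ℂ (An n (xs N)) (xs N) : ℂ).re) ≤ M := by
      have h1 : (inner ℂ (An n (xs N)) (xs N) : ℂ).re ≤ b N := aux_le_inner hAnB' (xs N)
      calc Real.sqrt ((inner ℂ (An n (xs N)) (xs N) : ℂ).re)
          ≤ Real.sqrt (M ^ 2) := Real.sqrt_le_sqrt (h1.trans (hbM N))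
        _ = M := Real.sqrt_sq hM0
    have hf3 : Real.sqrt ((inner ℂ (((T - P) - An n) (xs N)) (xs N) : ℂ).re) ≤ δ := by
      have h1 : (inner ℂ (((T - P) - An n) (xs N)) (xs N) : ℂ).re < δ ^ 2 := by
        rw [sub_apply, inner_sub_left]
        simp only [Complex.sub_re]
        simp only [hbdef] at hnδ
        exact hnδ
      calc Real.sqrt ((inner ℂ (((T - P) - An n) (xs N)) (xs N) : ℂ).re)
          ≤ Real.sqrt (δ ^ 2) := Real.sqrt_le_sqrt h1.le
        _ = δ := Real.sqrt_sq hδ.le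
    have hAnnA_re : ∀ k, (inner ℂ (An n (xs k)) (xs k) : ℂ).re ≤
        (n : ℝ) * (inner ℂ ((1 - T) (xs k)) (xs k) : ℂ).re := by
      intro k
      have h1 := aux_le_inner hAnnA (xs k)
      have h2 : (inner ℂ ((n • ((1 : H →L[ℂ] H) - T)) (xs k)) (xs k) : ℂ).re
          = (n : ℝ) * (inner ℂ ((1 - T) (xs k)) (xs k) : ℂ).re := by
        rw [smul_apply, ← Nat.cast_smul_eq_nsmul ℂ, inner_smul_left]
        simp [Complex.mul_re, inner_sub_left]
      rw [h2] at h1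
      exact h1
    have hbound : ∀ k, N ≤ k → b k ≤ M * δ +
        Real.sqrt ((n : ℝ) * (inner ℂ ((1 - T) (xs k)) (xs k) : ℂ).re) * M + M * δ := by
      intro k hk
      have hsplit : b k = (inner ℂ ((T - P) (xs k)) (xs k - xs N) : ℂ).re
          + ((inner ℂ (An n (xs k)) (xs N) : ℂ).re
            + (inner ℂ (((T - P) - An n) (xs k)) (xs N) : ℂ).re) := by
        have e1 : (inner ℂ ((T - P) (xs k)) (xs k) : ℂ)
            = inner ℂ ((T - P) (xs k)) (xs k - xs N) + inner ℂ ((T - P) (xs k)) (xs N) := by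
          rw [inner_sub_right]; ring
        have e2 : (inner ℂ ((T - P) (xs k)) (xs N) : ℂ)
            = inner ℂ (An n (xs k)) (xs N) + inner ℂ (((T - P) - An n) (xs k)) (xs N) := by
          rw [← inner_add_left]
          congr 1
          simp only [sub_apply]
          abel
        rw [hbdef]
        simp only [e1, e2, Complex.add_re]
      have t1 : (inner ℂ ((T - P) (xs k)) (xs k - xs N) : ℂ).re ≤ M * δ := by
        calc (inner ℂ ((T - P) (xs k)) (xs k - xs N) : ℂ).re
            ≤ ‖(inner ℂ ((T - P) (xs k)) (xs k - xs N) : ℂ)‖ := Complex.re_le_norm _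
          _ ≤ Real.sqrt (b k) * Real.sqrt (d k N) := aux_cs hB_pos _ _
          _ ≤ M * δ := by
              apply mul_le_mul (hsM k) _ (Real.sqrt_nonneg _) hM0
              exact le_of_lt ((Real.sqrt_lt' hδ).mpr (hN k hk N le_rfl))
      have t2 : (inner ℂ (An n (xs k)) (xs N) : ℂ).re ≤
          Real.sqrt ((n : ℝ) * (inner ℂ ((1 - T) (xs k)) (xs k) : ℂ).re) * M := by
        have hAnpos' : (An n).IsPositive := hAn_pos
        calc (inner ℂ (An n (xs k)) (xs N) : ℂ).re
            ≤ ‖(inner ℂ (An n (xs k)) (xs N) : ℂ)‖ := Complex.re_le_norm _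
          _ ≤ Real.sqrt ((inner ℂ (An n (xs k)) (xs k) : ℂ).re)
              * Real.sqrt ((inner ℂ (An n (xs N)) (xs N) : ℂ).re) := aux_cs hAnpos' _ _
          _ ≤ Real.sqrt ((n : ℝ) * (inner ℂ ((1 - T) (xs k)) (xs k) : ℂ).re) * M := by
              apply mul_le_mul (Real.sqrt_le_sqrt (hAnnA_re k)) hf2
                (Real.sqrt_nonneg _) (Real.sqrt_nonneg _)
      have t3 : (inner ℂ (((T - P) - An n) (xs k)) (xs N) : ℂ).re ≤ M * δ := by
        calc (inner ℂ (((T - P) - An n) (xs k)) (xs N) : ℂ).re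
            ≤ ‖(inner ℂ (((T - P) - An n) (xs k)) (xs N) : ℂ)‖ := Complex.re_le_norm _
          _ ≤ Real.sqrt ((inner ℂ (((T - P) - An n) (xs k)) (xs k) : ℂ).re)
              * Real.sqrt ((inner ℂ (((T - P) - An n) (xs N)) (xs N) : ℂ).re) :=
              aux_cs hBAn_pos _ _
          _ ≤ M * δ := by
              apply mul_le_mul _ hf3 (Real.sqrt_nonneg _) hM0
              have h1 : (inner ℂ (((T - P) - An n) (xs k)) (xs k) : ℂ).re ≤ b k := by
                rw [sub_apply, inner_sub_left]
                simp only [Complex.sub_re]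
                have := aux_re_nonneg hAn_pos (xs k)
                simp only [hbdef]
                linarith
              calc Real.sqrt ((inner ℂ (((T - P) - An n) (xs k)) (xs k) : ℂ).re)
                  ≤ Real.sqrt (M ^ 2) := Real.sqrt_le_sqrt (h1.trans (hbM k))
                _ = M := Real.sqrt_sq hM0
      rw [hsplit]
      linarith
    have hRHS : Tendsto (fun k => M * δ +
        Real.sqrt ((n : ℝ) * (inner ℂ ((1 - T) (xs k)) (xs k) : ℂ).re) * M + M * δ)
        atTop (𝓝 (M * δ + 0 * M + M * δ)) := by
      apply Tendsto.add (Tendsto.add tendsto_const_nhds _) tendsto_const_nhds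
      apply Tendsto.mul_const
      have h1 : Tendsto (fun k => (n : ℝ) * (inner ℂ ((1 - T) (xs k)) (xs k) : ℂ).re)
          atTop (𝓝 ((n : ℝ) * 0)) := hA0.const_mul _
      rw [mul_zero] at h1
      have h2 : Tendsto (fun k => Real.sqrt ((n : ℝ) *
          (inner ℂ ((1 - T) (xs k)) (xs k) : ℂ).re)) atTop (𝓝 (Real.sqrt 0)) :=
        (Real.continuous_sqrt.tendsto _).comp h1
      rw [Real.sqrt_zero] at h2
      exact h2
    exact le_of_tendsto_of_tendsto hb_tend hRHS
      (eventually_atTop.mpr ⟨N, fun k hk => hbound k hk⟩)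
  have hββ : β * β = 0 := by
    rcases le_or_gt (β * β) 0 with hle | hlt
    · exact le_antisymm hle (mul_self_nonneg β)
    · exfalso
      have hδ : (0:ℝ) < β * β / (4 * M + 1) := by positivity
      have := key _ hδ
      rw [zero_mul, add_zero] at this
      have h4 : (0:ℝ) < 4 * M + 1 := by linarith
      rw [show M * (β * β / (4 * M + 1)) + M * (β * β / (4 * M + 1))
          = (2 * M * (β * β)) / (4 * M + 1) from by ring] at this
      rw [le_div_iff₀ h4] at this
      nlinarith
  rw [show (0:ℝ) = β * β from hββ.symm]
  exact hb_tend
end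

section
/- Let H be a complex Hilbert space, let T be a positive bounded operator with T ≤ I, and let P be the orthogonal projection onto ker(I − T). For n ≥ 1, let R_n be a positive bounded operator satisfying ⟪R_n x, x⟫ = inf{ n·⟪(I − T)(x−y), x−y⟫ + ⟪T y, y⟫ : y ∈ H } for all x ∈ H (i.e., R_n = (n(I−T)) : T). Then R_n ≤ T − P for every n ≥ 1. -/
open ContinuousLinearMap Filter Topology

variable {H : Type*} [NormedAddCommGroup H] [InnerProductSpace ℂ H] [CompleteSpace H]

/-- Let `T` be a positive contraction and `P` the orthogonal projection onto `ker (1 - T)`.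
If `Rₙ = (n (1 - T)) : T` is the parallel sum, characterized by its quadratic form, then
`Rₙ ≤ T - P` for every `n ≥ 1`. -/
theorem statement13
    (T : H →L[ℂ] H) (hT : T.IsPositive) (hT1 : T ≤ 1)
    (P : H →L[ℂ] H)
    (hP : P = (LinearMap.ker (1 - T : H →L[ℂ] H).toLinearMap).subtypeL ∘L
      (LinearMap.ker (1 - T : H →L[ℂ] H).toLinearMap).orthogonalProjectionOnto)
    (R : ℕ → H →L[ℂ] H) (hRpos : ∀ n, 1 ≤ n → (R n).IsPositive)
    (hR : ∀ n : ℕ, 1 ≤ n → ∀ x : H, (inner ℂ (R n x) x : ℂ).re =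
      ⨅ y : H, ((n : ℝ) * (inner ℂ ((1 - T) (x - y)) (x - y) : ℂ).re
        + (inner ℂ (T y) y : ℂ).re)) :
    ∀ n : ℕ, 1 ≤ n → R n ≤ T - P := by
  intro n hn
  set K := LinearMap.ker (1 - T : H →L[ℂ] H).toLinearMap with hK
  have h1T : (1 - T).IsPositive := (le_def T 1).mp hT1
  have hPsa : IsSelfAdjoint P := by rw [hP]; exact isSelfAdjoint_starProjection K
  have hPmem : ∀ x : H, P x ∈ K := by
    intro x; rw [hP]; exact (K.orthogonalProjectionOnto x).2
  have hTP : ∀ x : H, T (P x) = P x := by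
    intro x
    have h := hPmem x
    rw [LinearMap.mem_ker] at h
    have h' : P x - T (P x) = 0 := by simpa [sub_apply] using h
    exact (sub_eq_zero.mp h').symm
  have hPid : ∀ u ∈ K, P u = u := by
    intro u hu
    rw [hP]
    exact K.starProjection_eq_self_iff.mpr hu
  have hPP : ∀ x : H, P (P x) = P x := fun x => hPid (P x) (hPmem x)
  rw [ContinuousLinearMap.le_def]
  refine ⟨((hT.isSelfAdjoint.sub hPsa).sub (hRpos n hn).isSelfAdjoint).isSymmetric, fun x => ?_⟩
  rw [reApplyInnerSelf_apply]
  -- symmetry facts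
  have h3 := hPsa.isSymmetric x (P x)
  have h4 := hPsa.isSymmetric (P x) x
  have h2a := hT.1 x (P x)
  simp only [ContinuousLinearMap.coe_coe] at h3 h4 h2a
  rw [hPP] at h3
  rw [hPP] at h4
  rw [hTP] at h2a
  have h2 : (inner ℂ (T x) (P x) : ℂ) = inner ℂ (P x) (P x) := h2a.trans h3.symm
  have key : (inner ℂ (T (x - P x)) (x - P x) : ℂ) = inner ℂ (T x) x - inner ℂ (P x) x := by
    have h1 : T (x - P x) = T x - P x := by rw [map_sub, hTP]
    rw [h1, inner_sub_left, inner_sub_right, inner_sub_right, h2, h4]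
    ring
  have hRle : (inner ℂ (R n x) x : ℂ).re ≤ (inner ℂ (T x) x : ℂ).re - (inner ℂ (P x) x : ℂ).re := by
    rw [hR n hn x]
    have hbdd : BddBelow (Set.range fun y : H =>
        ((n : ℝ) * (inner ℂ ((1 - T) (x - y)) (x - y) : ℂ).re + (inner ℂ (T y) y : ℂ).re)) := by
      refine ⟨0, ?_⟩
      rintro _ ⟨y, rfl⟩
      dsimp only
      have a1 : 0 ≤ (inner ℂ ((1 - T) (x - y)) (x - y) : ℂ).re := by
        exact h1T.re_inner_nonneg_left (x - y)
      have a2 : 0 ≤ (inner ℂ (T y) y : ℂ).re := by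
        simpa using hT.re_inner_nonneg_left y
      have := mul_nonneg (Nat.cast_nonneg n : (0 : ℝ) ≤ n) a1
      linarith
    refine le_trans (ciInf_le hbdd (x - P x)) ?_
    have e1 : x - (x - P x) = P x := sub_sub_cancel x (P x)
    rw [e1]
    have e2 : (1 - T) (P x) = 0 := by simp [sub_apply, hTP]
    rw [e2]
    simp only [inner_zero_left, Complex.zero_re, mul_zero, zero_add]
    rw [key]
    simp [Complex.sub_re]
  have hfinal : 0 ≤ (inner ℂ (T x) x : ℂ).re - (inner ℂ (P x) x : ℂ).re
      - (inner ℂ (R n x) x : ℂ).re := by linarith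
  simpa [sub_apply, inner_sub_left, Complex.sub_re] using hfinal
end

section
/- Let 𝒜 be a unital C*-algebra and let v and w be positive linear functionals on 𝒜. Let (w_n) be a sequence of positive linear functionals on 𝒜 with w_0 = w such that for every n, w_n − w_{n+1} is a positive linear functional satisfying (w_n − w_{n+1})(a* a) = inf{ w_n(b* b) + v(c* c) : b, c ∈ 𝒜, b + c = a } for all a ∈ 𝒜 (i.e., w_{n+1} = w_n − (w_n : v)). Then the pointwise limit w_s(a) := lim_{n→∞} w_n(a) exists for every a ∈ 𝒜 and defines a positive linear functional, w = (w − w_s) + w_s is a Lebesgue decomposition of w with respect to v: w_s and v are mutually singular, w − w_s is absolutely continuous with respect to v, and moreover w − w_s is the maximum of the set { u : u a positive linear functional on 𝒜, u ≤ w, u ≪ v }. -/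
open Filter Topology

/-- A linear functional `w` on a unital C*-algebra is positive if `w (a* a) ≥ 0`
(a nonnegative real number) for every `a`. -/
def IsPosFun {A : Type*} [CStarAlgebra A] (w : A →ₗ[ℂ] ℂ) : Prop :=
  ∀ a : A, 0 ≤ (w (star a * a)).re ∧ (w (star a * a)).im = 0

/-- `w` is absolutely continuous with respect to `v`: `v (aₙ* aₙ) → 0` and
`w ((aₙ - aₘ)* (aₙ - aₘ)) → 0` (as `n, m → ∞`) imply `w (aₙ* aₙ) → 0`. -/
def FunAC {A : Type*} [CStarAlgebra A] (w v : A →ₗ[ℂ] ℂ) : Prop :=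
  ∀ a : ℕ → A,
    Tendsto (fun n => (v (star (a n) * a n)).re) atTop (𝓝 0) →
    Tendsto (fun p : ℕ × ℕ => (w (star (a p.1 - a p.2) * (a p.1 - a p.2))).re)
      (atTop ×ˢ atTop) (𝓝 0) →
    Tendsto (fun n => (w (star (a n) * a n)).re) atTop (𝓝 0)

/-- `w` and `v` are mutually singular: the only positive functional dominated by both
is `0`. -/
def FunSingular {A : Type*} [CStarAlgebra A] (w v : A →ₗ[ℂ] ℂ) : Prop :=
  ∀ u : A →ₗ[ℂ] ℂ, IsPosFun u → IsPosFun (w - u) → IsPosFun (v - u) → u = 0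

namespace ArlAux

variable {A : Type*} [CStarAlgebra A]

/-- quadratic form of a functional -/
noncomputable def Q (u : A →ₗ[ℂ] ℂ) (a : A) : ℝ := (u (star a * a)).re

lemma Q_sub (u u' : A →ₗ[ℂ] ℂ) (a : A) : Q (u - u') a = Q u a - Q u' a := by
  simp [Q, LinearMap.sub_apply]

lemma Q_add_fun (u u' : A →ₗ[ℂ] ℂ) (a : A) : Q (u + u') a = Q u a + Q u' a := by
  simp [Q, LinearMap.add_apply]

lemma Q_neg_arg (u : A →ₗ[ℂ] ℂ) (a : A) : Q u (-a) = Q u a := by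
  simp [Q]

lemma Q_zero_arg (u : A →ₗ[ℂ] ℂ) : Q u 0 = 0 := by
  simp [Q]

lemma Q_nonneg {u : A →ₗ[ℂ] ℂ} (hu : IsPosFun u) (a : A) : 0 ≤ Q u a := (hu a).1

lemma im_eq {u : A →ₗ[ℂ] ℂ} (hu : IsPosFun u) (a : A) :
    (u (star a * a)).im = 0 := (hu a).2

lemma val_eq {u : A →ₗ[ℂ] ℂ} (hu : IsPosFun u) (a : A) :
    u (star a * a) = (Q u a : ℂ) := by
  apply Complex.ext
  · simp [Q]
  · simpa using im_eq hu a

lemma expansion (u : A →ₗ[ℂ] ℂ) (a b : A) :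
    u (star (a + b) * (a + b)) =
      u (star a * a) + u (star b * b) + u (star a * b) + u (star b * a) := by
  rw [star_add, add_mul, mul_add, mul_add, map_add, map_add, map_add]
  ring

lemma smul_expansion (u : A →ₗ[ℂ] ℂ) (c : ℂ) (a b : A) :
    u (star (c • a + b) * (c • a + b)) =
      (starRingEnd ℂ c) * c * u (star a * a) + u (star b * b)
        + (starRingEnd ℂ c) * u (star a * b) + c * u (star b * a) := by
  simp only [star_add, star_smul, add_mul, mul_add, smul_mul_assoc, mul_smul_comm,
    map_add, map_smul, smul_smul, smul_eq_mul, Complex.star_def]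
  ring

/-- hermitian symmetry -/
lemma herm {u : A →ₗ[ℂ] ℂ} (hu : IsPosFun u) (a b : A) :
    u (star b * a) = starRingEnd ℂ (u (star a * b)) := by
  set z := u (star a * b) with hz
  set z' := u (star b * a) with hz'
  have h1 : z.im + z'.im = 0 := by
    have h := im_eq hu (a + b)
    rw [expansion] at h
    have ha := im_eq hu a; have hb := im_eq hu b
    simp only [Complex.add_im, ← hz, ← hz'] at h
    linarith
  have h2 : z.re - z'.re = 0 := by
    have h := im_eq hu (Complex.I • a + b)
    rw [smul_expansion] at h
    have ha := im_eq hu a; have hb := im_eq hu b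
    simp only [Complex.add_im, Complex.mul_im, Complex.conj_re, Complex.conj_im,
      Complex.I_re, Complex.I_im, ← hz, ← hz', ha, hb] at h
    ring_nf at h ⊢
    linarith
  apply Complex.ext
  · simp only [Complex.conj_re]; linarith
  · simp only [Complex.conj_im]; linarith

/-- Cauchy–Schwarz -/
lemma cs {u : A →ₗ[ℂ] ℂ} (hu : IsPosFun u) (a b : A) :
    ‖u (star a * b)‖ ^ 2 ≤ Q u a * Q u b := by
  set z := u (star a * b) with hz
  set z2 := ‖z‖ ^ 2 with hz2
  have key : ∀ t : ℝ, 0 ≤ (z2 * Q u a) * (t * t) + (-2 * z2) * t + Q u b := by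
    intro t
    have h0 := Q_nonneg hu ((-(t : ℂ) * z) • a + b)
    have hexp := smul_expansion u (-(t : ℂ) * z) a b
    have habs : z2 = z.re ^ 2 + z.im ^ 2 := by
      rw [hz2, Complex.sq_norm, Complex.normSq_apply]; ring
    have hval : (u (star ((-(t : ℂ) * z) • a + b) * ((-(t : ℂ) * z) • a + b))).re =
        (z2 * Q u a) * (t * t) + (-2 * z2) * t + Q u b := by
      rw [hexp, herm hu a b, ← hz, val_eq hu a, val_eq hu b]
      simp only [Complex.add_re, Complex.mul_re, Complex.mul_im, Complex.conj_re,
        Complex.conj_im, Complex.ofReal_re, Complex.ofReal_im, Complex.neg_re,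
        Complex.neg_im, map_mul, Complex.conj_ofReal, habs]
      ring
    rw [Q, hval] at h0
    exact h0
  have hd := discrim_le_zero key
  simp only [discrim] at hd
  by_cases habs : z2 = 0
  · rw [habs]
    exact mul_nonneg (Q_nonneg hu a) (Q_nonneg hu b)
  · have hzpos : 0 < z2 := lt_of_le_of_ne (by positivity) (Ne.symm habs)
    nlinarith [hd, hzpos]


lemma cs' {u : A →ₗ[ℂ] ℂ} (hu : IsPosFun u) (a b : A) :
    ‖u (star a * b)‖ ≤ Real.sqrt (Q u a) * Real.sqrt (Q u b) := by
  have h := cs hu a b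
  have : ‖u (star a * b)‖ = Real.sqrt (‖u (star a * b)‖ ^ 2) := by
    rw [Real.sqrt_sq (norm_nonneg _)]
  rw [this, ← Real.sqrt_mul (Q_nonneg hu a)]
  exact Real.sqrt_le_sqrt h

lemma abs_apply_sq {u : A →ₗ[ℂ] ℂ} (hu : IsPosFun u) (x : A) :
    ‖u x‖ ^ 2 ≤ Q u 1 * Q u x := by
  have := cs hu 1 x
  rwa [star_one, one_mul] at this

lemma Q_mono {p q : A →ₗ[ℂ] ℂ} (h : IsPosFun (p - q)) (a : A) : Q q a ≤ Q p a := by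
  have := Q_nonneg h a
  rw [Q_sub] at this
  linarith

lemma isPosFun_add {p q : A →ₗ[ℂ] ℂ} (hp : IsPosFun p) (hq : IsPosFun q) :
    IsPosFun (p + q) := by
  intro a
  have h1 := hp a; have h2 := hq a
  constructor
  · simp only [LinearMap.add_apply, Complex.add_re]; linarith [h1.1, h2.1]
  · simp only [LinearMap.add_apply, Complex.add_im]; rw [h1.2, h2.2]; ring

lemma Q_add_le {u : A →ₗ[ℂ] ℂ} (hu : IsPosFun u) (a b : A) :
    Q u (a + b) ≤ (Real.sqrt (Q u a) + Real.sqrt (Q u b)) ^ 2 := by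
  have hexp := congrArg Complex.re (expansion u a b)
  have hherm := herm hu a b
  have habs : (u (star a * b)).re ≤ Real.sqrt (Q u a) * Real.sqrt (Q u b) :=
    le_trans (Complex.re_le_norm _) (cs' hu a b)
  have h1 : Q u (a + b) = Q u a + Q u b + 2 * (u (star a * b)).re := by
    rw [Q, hexp, hherm]
    simp only [Complex.add_re, Complex.conj_re, Q]
    ring
  have hsa := Real.sq_sqrt (Q_nonneg hu a)
  have hsb := Real.sq_sqrt (Q_nonneg hu b)
  nlinarith

lemma sqrt_Q_add_le {u : A →ₗ[ℂ] ℂ} (hu : IsPosFun u) (a b : A) :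
    Real.sqrt (Q u (a + b)) ≤ Real.sqrt (Q u a) + Real.sqrt (Q u b) := by
  have h := Q_add_le hu a b
  have hnn : 0 ≤ Real.sqrt (Q u a) + Real.sqrt (Q u b) := by positivity
  calc Real.sqrt (Q u (a + b)) ≤ Real.sqrt ((Real.sqrt (Q u a) + Real.sqrt (Q u b)) ^ 2) :=
        Real.sqrt_le_sqrt h
    _ = _ := Real.sqrt_sq hnn

lemma sqrt_Q_sub_ge {u : A →ₗ[ℂ] ℂ} (hu : IsPosFun u) (a b : A) :
    Real.sqrt (Q u a) ≤ Real.sqrt (Q u (a - b)) + Real.sqrt (Q u b) := by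
  have := sqrt_Q_add_le hu (a - b) b
  rwa [sub_add_cancel] at this

lemma Q_two_add {u : A →ₗ[ℂ] ℂ} (hu : IsPosFun u) (a b : A) :
    Q u (a + b) ≤ 2 * Q u a + 2 * Q u b := by
  have h := Q_add_le hu a b
  have hsa := Real.sq_sqrt (Q_nonneg hu a)
  have hsb := Real.sq_sqrt (Q_nonneg hu b)
  have h2 : (Real.sqrt (Q u a) - Real.sqrt (Q u b)) ^ 2 ≥ 0 := sq_nonneg _
  nlinarith

lemma re_split (u : A →ₗ[ℂ] ℂ) (x y : A) :
    (u (star x * x)).re = (u (star (x - y) * x)).re + (u (star y * x)).re := by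
  have : star x * x = star (x - y) * x + star y * x := by
    rw [star_sub, sub_mul]; abel
  rw [this, map_add, Complex.add_re]


lemma Q_smul (u : A →ₗ[ℂ] ℂ) (c : ℂ) (x : A) :
    Q u (c • x) = Complex.normSq c * Q u x := by
  have h : star (c • x) * (c • x) = (starRingEnd ℂ c * c) • (star x * x) := by
    rw [star_smul, smul_mul_smul_comm]
    rfl
  have h2 : starRingEnd ℂ c * c = (Complex.normSq c : ℂ) := by
    rw [mul_comm, Complex.mul_conj]
  rw [Q, h, h2, map_smul, smul_eq_mul]
  simp [Complex.mul_re, Q]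

lemma Q_double (u : A →ₗ[ℂ] ℂ) (x : A) : Q u (x + x) = 4 * Q u x := by
  have h : x + x = (2 : ℂ) • x := (two_smul ℂ x).symm
  rw [h, Q_smul]
  norm_num [Complex.normSq_apply]

lemma Q_parallelogram (u : A →ₗ[ℂ] ℂ) (x y : A) :
    Q u (x + y) + Q u (x - y) = 2 * Q u x + 2 * Q u y := by
  have h1 := expansion u x y
  have h2 : u (star (x - y) * (x - y)) = u (star x * x) + u (star y * y)
      - u (star x * y) - u (star y * x) := by
    rw [sub_eq_add_neg, expansion u x (-y)]
    simp only [star_neg, neg_mul, mul_neg, map_neg]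
    ring
  simp only [Q, h1, h2, Complex.add_re, Complex.sub_re]
  ring



set_option maxHeartbeats 1000000 in
lemma acPart {A : Type*} [CStarAlgebra A] (v w ws : A →ₗ[ℂ] ℂ) (wn : ℕ → A →ₗ[ℂ] ℂ)
    (hv : IsPosFun v) (hw0 : wn 0 = w)
    (hwws : IsPosFun (w - ws))
    (hposdiff : ∀ n m, n ≤ m → IsPosFun (wn n - wn m))
    (hsub_pos : ∀ k, IsPosFun (wn k - ws))
    (hQws_le : ∀ k a, Q ws a ≤ Q (wn k) a)
    (hQle_w : ∀ n a, Q (wn n) a ≤ Q w a)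
    (hQsv : ∀ (N : ℕ) (x : A), Q w x - Q (wn N) x ≤ N * Q v x)
    (hlQ : ∀ a, Filter.Tendsto (fun n => Q (wn n) a) Filter.atTop (nhds (Q ws a))) :
    FunAC (w - ws) v := by
  intro aa hv1 hC
  set u : A →ₗ[ℂ] ℂ := w - ws with hu_def
  have hu : IsPosFun u := hwws
  have hv1' : Filter.Tendsto (fun n => Q v (aa n)) Filter.atTop (nhds 0) := hv1
  have hC' : Filter.Tendsto (fun p : ℕ × ℕ => Q u (aa p.1 - aa p.2))
      (Filter.atTop ×ˢ Filter.atTop) (nhds 0) := hC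
  show Filter.Tendsto (fun n => Q u (aa n)) Filter.atTop (nhds 0)
  have husplit : ∀ N : ℕ, u = (w - wn N) + (wn N - ws) := fun N => by
    rw [hu_def, sub_add_sub_cancel]
  have hsN : ∀ N, IsPosFun (w - wn N) := fun N => by
    have := hposdiff 0 N (Nat.zero_le N); rwa [hw0] at this
  have hrN : ∀ N, IsPosFun (wn N - ws) := hsub_pos
  have hQsN_le_u : ∀ (N : ℕ) (y : A), Q (w - wn N) y ≤ Q u y := by
    intro N y
    rw [Q_sub, hu_def, Q_sub]
    have := hQws_le N y
    linarith
  have hQrN_le_u : ∀ (N : ℕ) (y : A), Q (wn N - ws) y ≤ Q u y := by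
    intro N y
    rw [Q_sub, hu_def, Q_sub]
    have := hQle_w N y
    linarith
  have hQsv' : ∀ (N : ℕ) (y : A), Q (w - wn N) y ≤ N * Q v y := by
    intro N y; rw [Q_sub]; exact hQsv N y
  have hQrN0 : ∀ y : A, Filter.Tendsto (fun N => Q (wn N - ws) y) Filter.atTop (nhds 0) := by
    intro y
    have h := (hlQ y).sub_const (Q ws y)
    simp only [sub_self] at h
    have : (fun N => Q (wn N - ws) y) = fun N => Q (wn N) y - Q ws y := by
      funext N; rw [Q_sub]
    rw [this]
    exact h
  have hext : ∀ δ : ℝ, 0 < δ → ∃ K : ℕ, ∀ k l, K ≤ k → K ≤ l → Q u (aa k - aa l) ≤ δ := by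
    intro δ hδ
    have h := hC'.eventually_lt_const hδ
    rw [Filter.prod_atTop_atTop_eq, Filter.eventually_atTop] at h
    obtain ⟨⟨N1, N2⟩, hN⟩ := h
    exact ⟨max N1 N2, fun k l hk hl => (hN (k, l)
      ⟨le_trans (le_max_left _ _) hk, le_trans (le_max_right _ _) hl⟩).le⟩
  obtain ⟨K₀, hK₀⟩ := hext 1 one_pos
  set M : ℝ := Real.sqrt (Q u (aa K₀)) + 1 with hM_def
  have hM1 : 1 ≤ M := by
    have := Real.sqrt_nonneg (Q u (aa K₀)); rw [hM_def]; linarith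
  have hMpos : 0 < M := lt_of_lt_of_le one_pos hM1
  have hM : ∀ k, K₀ ≤ k → Real.sqrt (Q u (aa k)) ≤ M := by
    intro k hk
    have h1 := sqrt_Q_sub_ge hu (aa k) (aa K₀)
    have h3 : Real.sqrt (Q u (aa k - aa K₀)) ≤ 1 :=
      Real.sqrt_le_one.mpr (hK₀ k K₀ hk le_rfl)
    rw [hM_def]; linarith
  have hM2 : ∀ k, K₀ ≤ k → Q u (aa k) ≤ M ^ 2 := by
    intro k hk
    have h := hM k hk
    have h2 := Real.sq_sqrt (Q_nonneg hu (aa k))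
    nlinarith [Real.sqrt_nonneg (Q u (aa k))]
  rw [Metric.tendsto_atTop]
  intro ε hε
  set ε' : ℝ := ε / (2 * M + 2) with hε'_def
  have hε'pos : 0 < ε' := div_pos hε (by linarith)
  obtain ⟨K₂, hK₂⟩ := hext (ε' ^ 2) (by positivity)
  refine ⟨max K₀ K₂, ?_⟩
  intro k hk
  have hkK₀ : K₀ ≤ k := le_trans (le_max_left _ _) hk
  have hkK₂ : K₂ ≤ k := le_trans (le_max_right _ _) hk
  obtain ⟨N, hN⟩ : ∃ N : ℕ, Q (wn N - ws) (aa k) ≤ ε' ^ 2 :=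
    (((hQrN0 (aa k)).eventually_lt_const (by positivity : (0:ℝ) < ε' ^ 2)).exists).imp
      (fun N h => h.le)
  obtain ⟨li, hli1, hli2⟩ : ∃ li : ℕ, max K₀ K₂ ≤ li ∧
      (N : ℝ) * Q v (aa li) ≤ ε' ^ 2 / M ^ 2 := by
    have hδ : (0:ℝ) < ε' ^ 2 / M ^ 2 / (N + 1) := by positivity
    obtain ⟨li, h1, h2⟩ := ((Filter.eventually_ge_atTop (max K₀ K₂)).and
      (hv1'.eventually_lt_const hδ)).exists
    refine ⟨li, h1, ?_⟩
    have hvnn := Q_nonneg hv (aa li)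
    have hNle : (N : ℝ) ≤ (N : ℝ) + 1 := by linarith
    calc (N : ℝ) * Q v (aa li) ≤ ((N : ℝ) + 1) * Q v (aa li) := by nlinarith
      _ ≤ ((N : ℝ) + 1) * (ε' ^ 2 / M ^ 2 / (N + 1)) := by
          apply mul_le_mul_of_nonneg_left h2.le (by positivity)
      _ = ε' ^ 2 / M ^ 2 := by field_simp
  have hliK₀ : K₀ ≤ li := le_trans (le_max_left _ _) hli1
  -- three-term estimate
  have split1 : Q u (aa k) = (u (star (aa k - aa li) * (aa k))).re
      + (u (star (aa li) * (aa k))).re := re_split u (aa k) (aa li)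
  have t1 : (u (star (aa k - aa li) * aa k)).re ≤ ε' * M := by
    refine le_trans (Complex.re_le_norm _) (le_trans (cs' hu _ _) ?_)
    have h1 : Real.sqrt (Q u (aa k - aa li)) ≤ ε' := by
      have := hK₂ k li hkK₂ (le_trans (le_max_right _ _) hli1)
      calc Real.sqrt (Q u (aa k - aa li)) ≤ Real.sqrt (ε' ^ 2) := Real.sqrt_le_sqrt this
        _ = ε' := Real.sqrt_sq hε'pos.le
    exact mul_le_mul h1 (hM k hkK₀) (Real.sqrt_nonneg _) hε'pos.le
  have husplit_app : (u (star (aa li) * aa k)).re =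
      ((w - wn N) (star (aa li) * aa k)).re + ((wn N - ws) (star (aa li) * aa k)).re := by
    rw [husplit N]
    simp [LinearMap.add_apply]
  have t2 : ((w - wn N) (star (aa li) * aa k)).re ≤ ε' := by
    refine le_trans (Complex.re_le_norm _) (le_trans (cs' (hsN N) _ _) ?_)
    have h1 : Real.sqrt (Q (w - wn N) (aa li)) ≤ ε' / M := by
      have hle : Q (w - wn N) (aa li) ≤ ε' ^ 2 / M ^ 2 :=
        le_trans (hQsv' N (aa li)) hli2
      calc Real.sqrt (Q (w - wn N) (aa li)) ≤ Real.sqrt (ε' ^ 2 / M ^ 2) :=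
            Real.sqrt_le_sqrt hle
        _ = ε' / M := by
            rw [← div_pow, Real.sqrt_sq (by positivity)]
    have h2 : Real.sqrt (Q (w - wn N) (aa k)) ≤ M := by
      refine le_trans (Real.sqrt_le_sqrt (hQsN_le_u N (aa k))) (hM k hkK₀)
    calc Real.sqrt (Q (w - wn N) (aa li)) * Real.sqrt (Q (w - wn N) (aa k))
        ≤ (ε' / M) * M := mul_le_mul h1 h2 (Real.sqrt_nonneg _) (by positivity)
      _ = ε' := div_mul_cancel₀ ε' (ne_of_gt hMpos)
  have t3 : ((wn N - ws) (star (aa li) * aa k)).re ≤ M * ε' := by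
    refine le_trans (Complex.re_le_norm _) (le_trans (cs' (hrN N) _ _) ?_)
    have h1 : Real.sqrt (Q (wn N - ws) (aa li)) ≤ M :=
      le_trans (Real.sqrt_le_sqrt (hQrN_le_u N (aa li))) (hM li hliK₀)
    have h2 : Real.sqrt (Q (wn N - ws) (aa k)) ≤ ε' := by
      calc Real.sqrt (Q (wn N - ws) (aa k)) ≤ Real.sqrt (ε' ^ 2) := Real.sqrt_le_sqrt hN
        _ = ε' := Real.sqrt_sq hε'pos.le
    exact mul_le_mul h1 h2 (Real.sqrt_nonneg _) hMpos.le
  have hfin : Q u (aa k) ≤ ε' * (2 * M + 1) := by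
    rw [split1, husplit_app]
    nlinarith
  have hlt : ε' * (2 * M + 1) < ε := by
    have : ε' * (2 * M + 2) = ε := by
      rw [hε'_def]; field_simp
    nlinarith
  rw [Real.dist_eq, sub_zero, _root_.abs_of_nonneg (Q_nonneg hu (aa k))]
  linarith


set_option maxHeartbeats 1000000 in
lemma maxPart {A : Type*} [CStarAlgebra A] (v w ws : A →ₗ[ℂ] ℂ) (wn : ℕ → A →ₗ[ℂ] ℂ)
    (hv : IsPosFun v) (hw : IsPosFun w) (hw0 : wn 0 = w)
    (hinf : ∀ (n : ℕ) (a : A), Q (wn n) a - Q (wn (n + 1)) a =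
      sInf {r : ℝ | ∃ b c : A, b + c = a ∧ r = Q (wn n) b + Q v c})
    (hSbdd : ∀ (n : ℕ) (a : A),
      BddBelow {r : ℝ | ∃ b c : A, b + c = a ∧ r = Q (wn n) b + Q v c})
    (hSne : ∀ (n : ℕ) (a : A),
      Set.Nonempty {r : ℝ | ∃ b c : A, b + c = a ∧ r = Q (wn n) b + Q v c})
    (hQnn : ∀ (n : ℕ) (a : A), 0 ≤ Q (wn n) a)
    (hdnn : ∀ (n : ℕ) (x : A), 0 ≤ Q (wn n) x - Q (wn (n + 1)) x)
    (hQmono : ∀ n m, n ≤ m → ∀ a : A, Q (wn m) a ≤ Q (wn n) a)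
    (hposdiff : ∀ n m, n ≤ m → IsPosFun (wn n - wn m))
    (hQle_w : ∀ (n : ℕ) (a : A), Q (wn n) a ≤ Q w a)
    (hQsv : ∀ (N : ℕ) (x : A), Q w x - Q (wn N) x ≤ N * Q v x)
    (hQws_le : ∀ (k : ℕ) (a : A), Q ws a ≤ Q (wn k) a)
    (hQws_le_w : ∀ a : A, Q ws a ≤ Q w a)
    (hws_im : ∀ a : A, (ws (star a * a)).im = 0)
    (hlQ : ∀ a, Filter.Tendsto (fun n => Q (wn n) a) Filter.atTop (nhds (Q ws a)))
    (u : A →ₗ[ℂ] ℂ) (hu : IsPosFun u) (hwu : IsPosFun (w - u)) (huac : FunAC u v) :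
    IsPosFun (w - ws - u) := by
  intro a
  have him : ((w - ws - u) (star a * a)).im = 0 := by
    simp [LinearMap.sub_apply, Complex.sub_im, im_eq hw a, hws_im a, im_eq hu a]
  have hre : ((w - ws - u) (star a * a)).re = Q w a - Q ws a - Q u a := by
    simp [Q, LinearMap.sub_apply, Complex.sub_re]
  refine ⟨?_, him⟩
  rw [hre]
  have hXnn : 0 ≤ Q w a - Q ws a := by linarith [hQws_le_w a]
  obtain ⟨W, hW_def⟩ : ∃ W : ℕ → ℝ, W = fun k => Q (wn k) a := ⟨_, rfl⟩
  obtain ⟨D, hD_def⟩ : ∃ D : ℕ → ℝ, D = fun k => W k - W (k + 1) := ⟨_, rfl⟩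
  obtain ⟨η, hη_def⟩ : ∃ η : ℕ → ℝ, η = fun k : ℕ => (((k : ℝ) + 1)⁻¹) ^ 2 := ⟨_, rfl⟩
  have hWk : ∀ k, W k = Q (wn k) a := fun k => by rw [hW_def]
  have hDk : ∀ k, D k = W k - W (k + 1) := fun k => by rw [hD_def]
  have hηk : ∀ k, η k = (((k : ℝ) + 1)⁻¹) ^ 2 := fun k => by rw [hη_def]
  have hWanti : ∀ i j, i ≤ j → W j ≤ W i := by
    intro i j h; rw [hWk, hWk]; exact hQmono i j h a
  have hWL : ∀ k, Q ws a ≤ W k := fun k => by rw [hWk]; exact hQws_le k a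
  have hWtend : Filter.Tendsto W Filter.atTop (nhds (Q ws a)) := by
    rw [hW_def]; exact hlQ a
  have hDnn : ∀ k, 0 ≤ D k := by
    intro k; rw [hDk, hWk, hWk]; exact hdnn k a
  have hDle : ∀ k, D k ≤ W k - Q ws a := by
    intro k; rw [hDk]; linarith [hWL (k + 1)]
  have hηpos : ∀ k, 0 < η k := by intro k; rw [hηk]; positivity
  have hηanti : ∀ i j, i ≤ j → η j ≤ η i := by
    intro i j h
    rw [hηk, hηk]
    have h1 : ((i : ℝ) + 1) ≤ ((j : ℝ) + 1) := by
      have := (Nat.cast_le (α := ℝ)).mpr h; linarith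
    have h2 : (0 : ℝ) < (i : ℝ) + 1 := by positivity
    have h3 := inv_anti₀ h2 h1
    have h4 : (0 : ℝ) ≤ ((j : ℝ) + 1)⁻¹ := by positivity
    nlinarith
  have hηmul : ∀ k : ℕ, ((k : ℝ) + 1) * η k = ((k : ℝ) + 1)⁻¹ := by
    intro k
    rw [hηk, sq, ← mul_assoc, mul_inv_cancel₀ (by positivity : ((k : ℝ) + 1) ≠ 0), one_mul]
  have hinvtend : Filter.Tendsto (fun k : ℕ => ((k : ℝ) + 1)⁻¹) Filter.atTop (nhds 0) := by
    have := tendsto_one_div_add_atTop_nhds_zero_nat (𝕜 := ℝ)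
    simpa [one_div] using this
  have hηtend : Filter.Tendsto η Filter.atTop (nhds 0) := by
    rw [hη_def]
    have := hinvtend.mul hinvtend
    simpa [pow_two] using this
  have hτtend : Filter.Tendsto (fun j => W j - Q ws a) Filter.atTop (nhds 0) := by
    have := hWtend.sub_const (Q ws a)
    simpa using this
  have hτnn : ∀ j, 0 ≤ W j - Q ws a := fun j => by linarith [hWL j]
  have claim : ∀ j : ℕ, ∃ m : ℕ, j ≤ m ∧ ((m : ℝ) + 1) * D m ≤ 2 * (W j - Q ws a) := by
    intro j
    by_contra hcon
    push_neg at hcon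
    rcases eq_or_lt_of_le (hτnn j) with hτ0 | hτpos
    · have h1 := hcon j le_rfl
      have h2 : D j ≤ W j - Q ws a := hDle j
      have hD0 : D j = 0 := le_antisymm (by linarith) (hDnn j)
      rw [hD0, mul_zero] at h1
      linarith
    · have htel' := Finset.sum_range_sub' (f := fun i => W (j + i)) (j + 2)
      have hconv : ∀ i, W (j + i) - W (j + (i + 1)) = D (j + i) := by
        intro i; rw [hDk (j + i), Nat.add_assoc]
      rw [Finset.sum_congr rfl (fun i _ => hconv i)] at htel'
      have hlb : ∀ i ∈ Finset.range (j + 2),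
          (W j - Q ws a) / ((j : ℝ) + 1) < D (j + i) := by
        intro i hi
        rw [Finset.mem_range] at hi
        have h1 := hcon (j + i) (Nat.le_add_right j i)
        have hile : (i : ℝ) ≤ (j : ℝ) + 1 := by
          exact_mod_cast Nat.lt_succ_iff.mp hi
        have hcast : (((j + i : ℕ)) : ℝ) = (j : ℝ) + (i : ℝ) := by push_cast; ring
        rw [hcast] at h1
        have hD := hDnn (j + i)
        rw [div_lt_iff₀ (by positivity : (0 : ℝ) < (j : ℝ) + 1)]
        nlinarith
      have hne : (Finset.range (j + 2)).Nonempty := ⟨0, by simp⟩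
      have hsum := Finset.sum_lt_sum_of_nonempty hne hlb
      rw [htel', Finset.sum_const, Finset.card_range] at hsum
      have hcard : (j + 2) • ((W j - Q ws a) / ((j : ℝ) + 1)) =
          ((j : ℝ) + 2) * ((W j - Q ws a) / ((j : ℝ) + 1)) := by
        rw [nsmul_eq_mul]; push_cast; ring
      rw [hcard] at hsum
      have hWb : W (j + 0) - W (j + (j + 2)) ≤ W j - Q ws a := by
        rw [show j + 0 = j from rfl]
        linarith [hWL (j + (j + 2))]
      have hj1 : (0 : ℝ) < (j : ℝ) + 1 := by positivity
      have hid : ((j : ℝ) + 2) * ((W j - Q ws a) / ((j : ℝ) + 1)) =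
          (W j - Q ws a) + (W j - Q ws a) / ((j : ℝ) + 1) := by
        field_simp
        ring
      have hdivpos : 0 < (W j - Q ws a) / ((j : ℝ) + 1) := div_pos hτpos hj1
      linarith [hsum, hWb, hid, hdivpos]
  choose φ hφ1 hφ2 using claim
  have hmin : ∀ k : ℕ, ∃ b c : A, b + c = a ∧ Q (wn k) b + Q v c < D k + η k := by
    intro k
    have hlt : sInf {r : ℝ | ∃ b c : A, b + c = a ∧ r = Q (wn k) b + Q v c} <
        D k + η k := by
      rw [← hinf k a, hDk, hWk, hWk]
      linarith [hηpos k]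
    obtain ⟨r, hrmem, hrlt⟩ := (csInf_lt_iff (hSbdd k a) (hSne k a)).mp hlt
    obtain ⟨b, c, hbcx, rfl⟩ := hrmem
    exact ⟨b, c, hbcx, hrlt⟩
  choose bb cc hbc hbclt using hmin
  have hQvc : ∀ k, Q v (cc k) ≤ D k + η k := fun k => by
    linarith [hbclt k, hQnn k (bb k)]
  have hQbb : ∀ k, Q (wn k) (bb k) ≤ D k + η k := fun k => by
    linarith [hbclt k, Q_nonneg hv (cc k)]
  have hbma : ∀ k, bb k = a - cc k := fun k => eq_sub_of_add_eq (hbc k)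
  have pair : ∀ n m : ℕ, n ≤ m →
      Q w (cc n - cc m) ≤ 2 * η n + 4 * (D m + η m) + 4 * (W n - Q ws a)
        + 4 * (m : ℝ) * (D m + η m) + 2 * (n : ℝ) * (D n + η n)
        + 2 * (n : ℝ) * (D m + η m) := by
    intro n m hnm
    have hdiff := hposdiff n m hnm
    have hA : Q (wn n) (bb m) ≤ (D m + η m) + 2 * (W n - W m)
        + 2 * (m : ℝ) * Q v (cc m) := by
      have h1 : Q (wn n) (bb m) = Q (wn m) (bb m) + Q (wn n - wn m) (bb m) := by
        rw [Q_sub]; ring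
      have h2 : Q (wn n - wn m) (bb m) ≤ 2 * Q (wn n - wn m) a
          + 2 * Q (wn n - wn m) (cc m) := by
        have h3 : bb m = a + (- cc m) := by rw [hbma m, sub_eq_add_neg]
        rw [h3]
        have h4 := Q_two_add hdiff a (- cc m)
        rwa [Q_neg_arg] at h4
      have h4 : Q (wn n - wn m) a = W n - W m := by rw [Q_sub, hWk, hWk]
      have h5 : Q (wn n - wn m) (cc m) ≤ (m : ℝ) * Q v (cc m) := by
        rw [Q_sub]
        have h6 := hQsv m (cc m)
        have h7 := hQle_w n (cc m)
        linarith
      have h8 := hQbb m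
      linarith
    have hsum2 : (bb n + bb m) + (cc n + cc m) = a + a := by
      have h1 := hbc n; have h2 := hbc m
      calc (bb n + bb m) + (cc n + cc m) = (bb n + cc n) + (bb m + cc m) := by abel
        _ = a + a := by rw [h1, h2]
    have hinf2 : 4 * D n ≤ Q (wn n) (bb n + bb m) + Q v (cc n + cc m) := by
      have hmem : Q (wn n) (bb n + bb m) + Q v (cc n + cc m) ∈
          {r : ℝ | ∃ b c : A, b + c = a + a ∧ r = Q (wn n) b + Q v c} :=
        ⟨bb n + bb m, cc n + cc m, hsum2, rfl⟩
      have hle := csInf_le (hSbdd n (a + a)) hmem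
      rw [← hinf n (a + a), Q_double, Q_double] at hle
      rw [hDk, hWk, hWk]
      linarith
    have hpar1 : Q (wn n) (bb n + bb m) = 2 * Q (wn n) (bb n)
        + 2 * Q (wn n) (bb m) - Q (wn n) (bb n - bb m) := by
      have := Q_parallelogram (wn n) (bb n) (bb m); linarith
    have hpar2 : Q v (cc n + cc m) = 2 * Q v (cc n) + 2 * Q v (cc m)
        - Q v (cc n - cc m) := by
      have := Q_parallelogram v (cc n) (cc m); linarith
    have hEbc : Q (wn n) (bb n - bb m) + Q v (cc n - cc m) ≤
        2 * η n + 4 * (D m + η m) + 4 * (W n - Q ws a)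
          + 4 * (m : ℝ) * (D m + η m) := by
      have h1 := hbclt n
      have h2 := hQvc m
      have h3 : W n - W m ≤ W n - Q ws a := by linarith [hWL m]
      have h4 : (m : ℝ) * Q v (cc m) ≤ (m : ℝ) * (D m + η m) := by
        have h0 : (0 : ℝ) ≤ (m : ℝ) := Nat.cast_nonneg m
        nlinarith [hQvc m]
      have h5 := hDnn n
      linarith [hA, hinf2, hpar1, hpar2]
    have hflip : cc n - cc m = -(bb n - bb m) := by
      rw [hbma n, hbma m]; abel
    have hC1 : Q (wn n) (cc n - cc m) ≤ 2 * η n + 4 * (D m + η m)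
        + 4 * (W n - Q ws a) + 4 * (m : ℝ) * (D m + η m) := by
      have hq : Q (wn n) (cc n - cc m) = Q (wn n) (bb n - bb m) := by
        rw [hflip, Q_neg_arg]
      rw [hq]
      linarith [hEbc, Q_nonneg hv (cc n - cc m)]
    have hC2 : Q (w - wn n) (cc n - cc m) ≤ (n : ℝ) * Q v (cc n - cc m) := by
      rw [Q_sub]; exact hQsv n _
    have hC3 : Q v (cc n - cc m) ≤ 2 * Q v (cc n) + 2 * Q v (cc m) := by
      rw [sub_eq_add_neg]
      have := Q_two_add hv (cc n) (-(cc m))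
      rwa [Q_neg_arg] at this
    have hC4 : Q w (cc n - cc m) = Q (wn n) (cc n - cc m)
        + Q (w - wn n) (cc n - cc m) := by
      rw [Q_sub]; ring
    have hC5 : (n : ℝ) * Q v (cc n - cc m) ≤ 2 * (n : ℝ) * (D n + η n)
        + 2 * (n : ℝ) * (D m + η m) := by
      have hn0 : (0 : ℝ) ≤ (n : ℝ) := Nat.cast_nonneg n
      nlinarith [hC3, hQvc n, hQvc m]
    linarith [hC1, hC2, hC4, hC5]
  have hPb : ∀ J s, J ≤ s → (φ s : ℝ) * (D (φ s) + η (φ s)) ≤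
      2 * (W J - Q ws a) + ((J : ℝ) + 1)⁻¹ := by
    intro J s hJs
    have h1 : ((φ s : ℝ) + 1) * D (φ s) ≤ 2 * (W s - Q ws a) := hφ2 s
    have h2 : W s ≤ W J := hWanti J s hJs
    have h3 : (φ s : ℝ) * D (φ s) ≤ ((φ s : ℝ) + 1) * D (φ s) := by
      nlinarith [hDnn (φ s)]
    have h4 : (φ s : ℝ) * η (φ s) ≤ ((J : ℝ) + 1)⁻¹ := by
      have h5 : (φ s : ℝ) * η (φ s) ≤ ((φ s : ℝ) + 1) * η (φ s) := by
        nlinarith [le_of_lt (hηpos (φ s))]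
      rw [hηmul (φ s)] at h5
      have h6 : ((φ s : ℝ) + 1)⁻¹ ≤ ((J : ℝ) + 1)⁻¹ := by
        have hJφ : J ≤ φ s := le_trans hJs (hφ1 s)
        have h7 : ((J : ℝ) + 1) ≤ ((φ s : ℝ) + 1) := by
          have := (Nat.cast_le (α := ℝ)).mpr hJφ; linarith
        exact inv_anti₀ (by positivity) h7
      linarith
    rw [mul_add]
    linarith
  have hG : ∀ J i j, J ≤ i → J ≤ j →
      Q w (cc (φ i) - cc (φ j)) ≤ 6 * η J + 24 * (W J - Q ws a)
        + 8 * ((J : ℝ) + 1)⁻¹ := by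
    intro J i j hi hj
    have main : ∀ t s, J ≤ t → J ≤ s → φ t ≤ φ s →
        Q w (cc (φ t) - cc (φ s)) ≤ 6 * η J + 24 * (W J - Q ws a)
          + 8 * ((J : ℝ) + 1)⁻¹ := by
      intro t s ht hs hts
      have hp := pair (φ t) (φ s) hts
      have hJt : J ≤ φ t := le_trans ht (hφ1 t)
      have hJs : J ≤ φ s := le_trans hs (hφ1 s)
      have b1 : η (φ t) ≤ η J := hηanti J (φ t) hJt
      have b2 : η (φ s) ≤ η J := hηanti J (φ s) hJs
      have b3 : D (φ s) ≤ W J - Q ws a :=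
        le_trans (hDle (φ s)) (by linarith [hWanti J (φ s) hJs])
      have b4 : W (φ t) - Q ws a ≤ W J - Q ws a := by
        linarith [hWanti J (φ t) hJt]
      have b5 := hPb J s hs
      have b6 := hPb J t ht
      have b7 : (φ t : ℝ) * (D (φ s) + η (φ s)) ≤ (φ s : ℝ) * (D (φ s) + η (φ s)) := by
        have h1 : (φ t : ℝ) ≤ (φ s : ℝ) := Nat.cast_le.mpr hts
        have h2 : 0 ≤ D (φ s) + η (φ s) := by
          linarith [hDnn (φ s), le_of_lt (hηpos (φ s))]
        nlinarith
      linarith [hp, b1, b2, b3, b4, b5, b6, b7]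
    rcases le_total (φ i) (φ j) with h | h
    · exact main i j hi hj h
    · have hflip : cc (φ i) - cc (φ j) = -(cc (φ j) - cc (φ i)) := (neg_sub _ _).symm
      rw [hflip, Q_neg_arg]
      exact main j i hj hi h
  have hGtend : Filter.Tendsto (fun J => 6 * η J + 24 * (W J - Q ws a)
      + 8 * ((J : ℝ) + 1)⁻¹) Filter.atTop (nhds 0) := by
    have h1 := hηtend.const_mul (6 : ℝ)
    have h2 := hτtend.const_mul (24 : ℝ)
    have h3 := hinvtend.const_mul (8 : ℝ)
    have h4 := (h1.add h2).add h3
    simpa using h4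
  have hxv : Filter.Tendsto (fun j => Q v (cc (φ j))) Filter.atTop (nhds 0) := by
    apply squeeze_zero (fun j => Q_nonneg hv _) (g := fun j => (W j - Q ws a) + η j)
    · intro j
      have h1 := hQvc (φ j)
      have h2 : D (φ j) ≤ W j - Q ws a :=
        le_trans (hDle (φ j)) (by linarith [hWanti j (φ j) (hφ1 j)])
      have h3 : η (φ j) ≤ η j := hηanti j (φ j) (hφ1 j)
      linarith
    · simpa using hτtend.add hηtend
  have hxuC : Filter.Tendsto (fun p : ℕ × ℕ => Q u (cc (φ p.1) - cc (φ p.2)))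
      (Filter.atTop ×ˢ Filter.atTop) (nhds 0) := by
    rw [Filter.prod_atTop_atTop_eq]
    apply squeeze_zero (fun p => Q_nonneg hu _)
      (g := fun p : ℕ × ℕ => 6 * η (min p.1 p.2) + 24 * (W (min p.1 p.2) - Q ws a)
        + 8 * (((min p.1 p.2 : ℕ) : ℝ) + 1)⁻¹)
    · intro p
      have h1 := hG (min p.1 p.2) p.1 p.2 (min_le_left _ _) (min_le_right _ _)
      exact le_trans (Q_mono hwu _) h1
    · have hminT : Filter.Tendsto (fun p : ℕ × ℕ => min p.1 p.2) Filter.atTop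
          Filter.atTop := by
        rw [Filter.tendsto_atTop]
        intro b
        rw [Filter.eventually_atTop]
        exact ⟨(b, b), fun p hp => le_min hp.1 hp.2⟩
      exact hGtend.comp hminT
  have hxu : Filter.Tendsto (fun j => Q u (cc (φ j))) Filter.atTop (nhds 0) :=
    huac (fun j => cc (φ j)) hxv hxuC
  have hsNk : ∀ k, IsPosFun (w - wn k) := fun k => by
    have := hposdiff 0 k (Nat.zero_le k); rwa [hw0] at this
  have hfb : ∀ j, Q u (bb (φ j)) ≤ (D (φ j) + η (φ j)) +
      (Real.sqrt (Q w a - Q ws a)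
        + Real.sqrt ((φ j : ℝ) * (D (φ j) + η (φ j)))) ^ 2 := by
    intro j
    have h1 : Q u (bb (φ j)) ≤ Q w (bb (φ j)) := Q_mono hwu _
    have h2 : Q w (bb (φ j)) = Q (wn (φ j)) (bb (φ j)) + Q (w - wn (φ j)) (bb (φ j)) := by
      rw [Q_sub]; ring
    have h3 : Q (w - wn (φ j)) (bb (φ j)) ≤
        (Real.sqrt (Q (w - wn (φ j)) a) + Real.sqrt (Q (w - wn (φ j)) (cc (φ j)))) ^ 2 := by
      have h4 : bb (φ j) = a + (- cc (φ j)) := by rw [hbma (φ j), sub_eq_add_neg]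
      rw [h4]
      have h5 := Q_add_le (hsNk (φ j)) a (- cc (φ j))
      rwa [Q_neg_arg] at h5
    have h5 : Q (w - wn (φ j)) a ≤ Q w a - Q ws a := by
      rw [Q_sub]
      have h6 := hWL (φ j)
      rw [hWk] at h6
      linarith
    have h6 : Q (w - wn (φ j)) (cc (φ j)) ≤ (φ j : ℝ) * (D (φ j) + η (φ j)) := by
      rw [Q_sub]
      have h7 := hQsv (φ j) (cc (φ j))
      have h8 := hQvc (φ j)
      have h9 : (0 : ℝ) ≤ (φ j : ℝ) := Nat.cast_nonneg _
      nlinarith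
    have h10 : (Real.sqrt (Q (w - wn (φ j)) a)
          + Real.sqrt (Q (w - wn (φ j)) (cc (φ j)))) ^ 2 ≤
        (Real.sqrt (Q w a - Q ws a)
          + Real.sqrt ((φ j : ℝ) * (D (φ j) + η (φ j)))) ^ 2 := by
      have s1 : Real.sqrt (Q (w - wn (φ j)) a) ≤ Real.sqrt (Q w a - Q ws a) :=
        Real.sqrt_le_sqrt h5
      have s2 : Real.sqrt (Q (w - wn (φ j)) (cc (φ j))) ≤
          Real.sqrt ((φ j : ℝ) * (D (φ j) + η (φ j))) := Real.sqrt_le_sqrt h6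
      have s3 := Real.sqrt_nonneg (Q (w - wn (φ j)) a)
      have s4 := Real.sqrt_nonneg (Q (w - wn (φ j)) (cc (φ j)))
      nlinarith [Real.sqrt_nonneg (Q w a - Q ws a),
        Real.sqrt_nonneg ((φ j : ℝ) * (D (φ j) + η (φ j)))]
    have h11 := hQbb (φ j)
    linarith
  have ht1 : Filter.Tendsto (fun j => D (φ j) + η (φ j)) Filter.atTop (nhds 0) := by
    apply squeeze_zero
      (fun j => by linarith [hDnn (φ j), le_of_lt (hηpos (φ j))])
      (g := fun j => (W j - Q ws a) + η j)
    · intro j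
      have h2 : D (φ j) ≤ W j - Q ws a :=
        le_trans (hDle (φ j)) (by linarith [hWanti j (φ j) (hφ1 j)])
      have h3 : η (φ j) ≤ η j := hηanti j (φ j) (hφ1 j)
      linarith
    · simpa using hτtend.add hηtend
  have ht2 : Filter.Tendsto (fun j => (φ j : ℝ) * (D (φ j) + η (φ j)))
      Filter.atTop (nhds 0) := by
    apply squeeze_zero
      (fun j => mul_nonneg (Nat.cast_nonneg _)
        (by linarith [hDnn (φ j), le_of_lt (hηpos (φ j))]))
      (g := fun j => 2 * (W j - Q ws a) + ((j : ℝ) + 1)⁻¹)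
    · intro j; exact hPb j j le_rfl
    · have := (hτtend.const_mul (2 : ℝ)).add hinvtend
      simpa using this
  have hsq2 : Filter.Tendsto (fun j => Real.sqrt ((φ j : ℝ) * (D (φ j) + η (φ j))))
      Filter.atTop (nhds 0) := by
    exact (Real.continuous_sqrt.tendsto' 0 0 Real.sqrt_zero).comp ht2
  have hγ : Filter.Tendsto (fun j => (D (φ j) + η (φ j)) +
      (Real.sqrt (Q w a - Q ws a)
        + Real.sqrt ((φ j : ℝ) * (D (φ j) + η (φ j)))) ^ 2)
      Filter.atTop (nhds (Q w a - Q ws a)) := by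
    have h1 : Filter.Tendsto (fun j => Real.sqrt (Q w a - Q ws a)
        + Real.sqrt ((φ j : ℝ) * (D (φ j) + η (φ j)))) Filter.atTop
        (nhds (Real.sqrt (Q w a - Q ws a))) := by
      have h2 := (tendsto_const_nhds
        (x := Real.sqrt (Q w a - Q ws a)) (f := Filter.atTop (α := ℕ))).add hsq2
      simpa using h2
    have h2 := ht1.add (h1.pow 2)
    have h4 : Real.sqrt (Q w a - Q ws a) ^ 2 = Q w a - Q ws a := Real.sq_sqrt hXnn
    rw [h4] at h2
    simpa using h2
  have hsqγ : Filter.Tendsto (fun j => Real.sqrt ((D (φ j) + η (φ j)) +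
      (Real.sqrt (Q w a - Q ws a)
        + Real.sqrt ((φ j : ℝ) * (D (φ j) + η (φ j)))) ^ 2))
      Filter.atTop (nhds (Real.sqrt (Q w a - Q ws a))) := by
    exact (Real.continuous_sqrt.tendsto (Q w a - Q ws a)).comp hγ
  have hsqx : Filter.Tendsto (fun j => Real.sqrt (Q u (cc (φ j))))
      Filter.atTop (nhds 0) := by
    exact (Real.continuous_sqrt.tendsto' 0 0 Real.sqrt_zero).comp hxu
  have hub : ∀ j, Real.sqrt (Q u a) ≤ Real.sqrt ((D (φ j) + η (φ j)) +
      (Real.sqrt (Q w a - Q ws a)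
        + Real.sqrt ((φ j : ℝ) * (D (φ j) + η (φ j)))) ^ 2)
      + Real.sqrt (Q u (cc (φ j))) := by
    intro j
    have h1 : Real.sqrt (Q u a) ≤ Real.sqrt (Q u (bb (φ j)))
        + Real.sqrt (Q u (cc (φ j))) := by
      have h2 := sqrt_Q_add_le hu (bb (φ j)) (cc (φ j))
      rw [hbc (φ j)] at h2
      exact h2
    have h3 : Real.sqrt (Q u (bb (φ j))) ≤ Real.sqrt ((D (φ j) + η (φ j)) +
        (Real.sqrt (Q w a - Q ws a)
          + Real.sqrt ((φ j : ℝ) * (D (φ j) + η (φ j)))) ^ 2) :=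
      Real.sqrt_le_sqrt (hfb j)
    linarith
  have hfinal : Real.sqrt (Q u a) ≤ Real.sqrt (Q w a - Q ws a) := by
    have hT := hsqγ.add hsqx
    have h1 := ge_of_tendsto hT (Filter.Eventually.of_forall hub)
    simpa using h1
  have h1 : Q u a ≤ Q w a - Q ws a := by
    have h2 := Real.sq_sqrt (Q_nonneg hu a)
    have h3 := Real.sq_sqrt hXnn
    nlinarith [Real.sqrt_nonneg (Q u a), Real.sqrt_nonneg (Q w a - Q ws a)]
  linarith




end ArlAux

open ArlAux in
set_option maxHeartbeats 2000000 in
/-- Arlinskii's iteration for positive functionals on a unital C*-algebra: if `w₀ = w` and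
`w_{n+1} = wₙ - (wₙ : v)` (so `wₙ - w_{n+1}` is positive with
`(wₙ - w_{n+1})(a* a) = inf { wₙ(b* b) + v(c* c) : b + c = a }`), then the pointwise limit
`w_s` of `(wₙ)` exists, is a positive functional, `w_s ⟂ v`, `w - w_s ≪ v`, and `w - w_s`
is the maximum of all positive functionals `u ≤ w` with `u ≪ v`. -/
theorem statement15 {A : Type*} [CStarAlgebra A]
    (v w : A →ₗ[ℂ] ℂ) (hv : IsPosFun v) (hw : IsPosFun w)
    (wn : ℕ → A →ₗ[ℂ] ℂ) (hwn : ∀ n, IsPosFun (wn n)) (hw0 : wn 0 = w)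
    (hstep : ∀ n, IsPosFun (wn n - wn (n + 1)) ∧ ∀ a : A,
      ((wn n - wn (n + 1)) (star a * a)).re =
        sInf {r : ℝ | ∃ b c : A, b + c = a ∧
          r = ((wn n) (star b * b)).re + (v (star c * c)).re}) :
    ∃ ws : A →ₗ[ℂ] ℂ,
      (∀ a : A, Tendsto (fun n => wn n a) atTop (𝓝 (ws a))) ∧
      IsPosFun ws ∧
      FunSingular ws v ∧
      IsPosFun (w - ws) ∧
      FunAC (w - ws) v ∧
      (∀ u : A →ₗ[ℂ] ℂ, IsPosFun u → IsPosFun (w - u) → FunAC u v →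
        IsPosFun ((w - ws) - u)) := by
  classical
  have hstep1 : ∀ n, IsPosFun (wn n - wn (n + 1)) := fun n => (hstep n).1
  have hinf : ∀ n a, Q (wn n) a - Q (wn (n+1)) a =
      sInf {r : ℝ | ∃ b c : A, b + c = a ∧ r = Q (wn n) b + Q v c} := by
    intro n a
    have h := (hstep n).2 a
    rw [show ((wn n - wn (n+1)) (star a * a)).re = Q (wn n - wn (n+1)) a from rfl,
      Q_sub] at h
    exact h
  have hposdiff : ∀ n m, n ≤ m → IsPosFun (wn n - wn m) := by
    intro n m hnm
    induction m, hnm using Nat.le_induction with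
    | base =>
        intro a
        constructor
        · simp [Q]
        · simp
    | succ m hnm ih =>
        have := isPosFun_add ih (hstep1 m)
        rwa [sub_add_sub_cancel] at this
  have hQnn : ∀ n a, 0 ≤ Q (wn n) a := fun n a => Q_nonneg (hwn n) a
  have hQmono : ∀ n m, n ≤ m → ∀ a, Q (wn m) a ≤ Q (wn n) a :=
    fun n m h a => Q_mono (hposdiff n m h) a
  have hQle_w : ∀ n a, Q (wn n) a ≤ Q w a := fun n a => by
    have := hQmono 0 n (Nat.zero_le n) a
    rwa [hw0] at this
  have hSbdd : ∀ n a, BddBelow {r : ℝ | ∃ b c : A, b + c = a ∧ r = Q (wn n) b + Q v c} := by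
    intro n a
    refine ⟨0, ?_⟩
    rintro r ⟨b, c, -, rfl⟩
    exact add_nonneg (hQnn n b) (Q_nonneg hv c)
  have hSne : ∀ n a, Set.Nonempty {r : ℝ | ∃ b c : A, b + c = a ∧ r = Q (wn n) b + Q v c} :=
    fun n a => ⟨Q (wn n) a + Q v 0, a, 0, by simp, rfl⟩
  have hdle : ∀ n x, Q (wn n) x - Q (wn (n+1)) x ≤ Q v x := by
    intro n x
    rw [hinf n x]
    have hmem : Q v x ∈ {r : ℝ | ∃ b c : A, b + c = x ∧ r = Q (wn n) b + Q v c} :=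
      ⟨0, x, by simp, by rw [Q_zero_arg]; ring⟩
    exact csInf_le (hSbdd n x) hmem
  have hdnn : ∀ n x, 0 ≤ Q (wn n) x - Q (wn (n+1)) x := by
    intro n x
    have := Q_nonneg (hstep1 n) x
    rwa [Q_sub] at this
  have hQsv : ∀ N x, Q w x - Q (wn N) x ≤ N * Q v x := by
    intro N x
    induction N with
    | zero => rw [hw0]; simp
    | succ N ih =>
        have := hdle N x
        push_cast
        nlinarith [Q_nonneg hv x]
  -- convergence of Q (wn n) 1
  have hW1anti : Antitone (fun n => Q (wn n) 1) := antitone_nat_of_succ_le (fun n => by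
    have := hdnn n 1; linarith)
  have hW1bdd : BddBelow (Set.range (fun n => Q (wn n) 1)) := by
    refine ⟨0, ?_⟩
    rintro r ⟨n, rfl⟩
    exact hQnn n 1
  have hW1 : Filter.Tendsto (fun n => Q (wn n) 1) Filter.atTop (nhds (⨅ n, Q (wn n) 1)) :=
    tendsto_atTop_ciInf hW1anti hW1bdd
  set L1 : ℝ := ⨅ n, Q (wn n) 1 with hL1
  have hL1le : ∀ n, L1 ≤ Q (wn n) 1 := fun n => ciInf_le hW1bdd n
  -- Cauchy sequences and pointwise limit
  have hcauchy : ∀ x : A, CauchySeq (fun n => wn n x) := by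
    intro x
    apply cauchySeq_of_le_tendsto_0 (b := fun N => Real.sqrt ((Q (wn N) 1 - L1) * Q w x))
    · intro n m N hn hm
      have key : ∀ i j, i ≤ j → N ≤ i →
          dist (wn i x) (wn j x) ≤ Real.sqrt ((Q (wn N) 1 - L1) * Q w x) := by
        intro i j hij hNi
        have hp := hposdiff i j hij
        rw [dist_eq_norm]
        have h1 : wn i x - wn j x = (wn i - wn j) x := by simp
        rw [h1]
        have h2 := abs_apply_sq hp x
        have h3 : Q (wn i - wn j) 1 ≤ Q (wn N) 1 - L1 := by
          rw [Q_sub]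
          have := hQmono N i hNi 1
          have := hL1le j
          linarith
        have h4 : Q (wn i - wn j) x ≤ Q w x := by
          rw [Q_sub]
          have := hQle_w i x
          have := hQnn j x
          linarith
        have h5 : ‖(wn i - wn j) x‖ ^ 2 ≤ (Q (wn N) 1 - L1) * Q w x := by
          calc ‖(wn i - wn j) x‖ ^ 2 ≤ Q (wn i - wn j) 1 * Q (wn i - wn j) x :=
                h2
            _ ≤ (Q (wn N) 1 - L1) * Q w x := by
                apply mul_le_mul h3 h4 (Q_nonneg hp x)
                have := hL1le N; linarith
        calc ‖(wn i - wn j) x‖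
            = Real.sqrt (‖(wn i - wn j) x‖ ^ 2) := by
              rw [Real.sqrt_sq (norm_nonneg _)]
          _ ≤ Real.sqrt ((Q (wn N) 1 - L1) * Q w x) := Real.sqrt_le_sqrt h5
      rcases le_total n m with h | h
      · exact key n m h hn
      · rw [dist_comm]; exact key m n h hm
    · have h0 : Filter.Tendsto (fun N => (Q (wn N) 1 - L1) * Q w x) Filter.atTop (nhds 0) := by
        have := (hW1.sub (tendsto_const_nhds (x := L1))).mul_const (Q w x)
        simpa using this
      have := (Real.continuous_sqrt.tendsto' 0 0 Real.sqrt_zero).comp h0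
      exact this
  have hex : ∀ x : A, ∃ z : ℂ, Filter.Tendsto (fun n => wn n x) Filter.atTop (nhds z) :=
    fun x => cauchySeq_tendsto_of_complete (hcauchy x)
  choose l hl using hex
  have hladd : ∀ x y : A, l (x + y) = l x + l y := by
    intro x y
    refine tendsto_nhds_unique ?_ ((hl x).add (hl y))
    have : (fun n => wn n (x + y)) = fun n => wn n x + wn n y := by
      funext n; simp
    rw [← this]
    exact hl (x + y)
  have hlsmul : ∀ (c : ℂ) (x : A), l (c • x) = c * l x := by
    intro c x
    refine tendsto_nhds_unique ?_ ((hl x).const_mul c)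
    have : (fun n => wn n (c • x)) = fun n => c * wn n x := by
      funext n; simp
    rw [← this]
    exact hl (c • x)
  set ws : A →ₗ[ℂ] ℂ :=
    { toFun := l
      map_add' := hladd
      map_smul' := fun c x => by simpa using hlsmul c x } with hws
  have hlapp : ∀ x : A, Filter.Tendsto (fun n => wn n x) Filter.atTop (nhds (ws x)) :=
    fun x => hl x
  have hlQ : ∀ a : A, Filter.Tendsto (fun n => Q (wn n) a) Filter.atTop (nhds (Q ws a)) := by
    intro a
    exact (Complex.continuous_re.tendsto _).comp (hlapp (star a * a))
  have hlim : ∀ a : A, Filter.Tendsto (fun n => (wn n (star a * a)).im) Filter.atTop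
      (nhds ((ws (star a * a)).im)) :=
    fun a => (Complex.continuous_im.tendsto _).comp (hlapp (star a * a))
  have hws_im : ∀ a : A, (ws (star a * a)).im = 0 := by
    intro a
    have h := hlim a
    have h2 : (fun n => (wn n (star a * a)).im) = fun _ => (0 : ℝ) := by
      funext n; exact im_eq (hwn n) a
    rw [h2] at h
    exact (tendsto_nhds_unique h tendsto_const_nhds)
  have hwspos : IsPosFun ws := by
    intro a
    refine ⟨?_, hws_im a⟩
    exact ge_of_tendsto' (hlQ a) (fun n => hQnn n a)
  have hQws_le : ∀ k a, Q ws a ≤ Q (wn k) a := by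
    intro k a
    refine le_of_tendsto (hlQ a) ?_
    filter_upwards [Filter.eventually_ge_atTop k] with m hm
    exact hQmono k m hm a
  have hsub_pos : ∀ k, IsPosFun (wn k - ws) := by
    intro k a
    constructor
    · have h : ((wn k - ws) (star a * a)).re = Q (wn k) a - Q ws a := by
        simp [Q, LinearMap.sub_apply]
      rw [h]
      linarith [hQws_le k a]
    · simp [LinearMap.sub_apply, Complex.sub_im, im_eq (hwn k) a, hws_im a]
  have hwws : IsPosFun (w - ws) := by
    have := hsub_pos 0
    rwa [hw0] at this
  have hQws_le_w : ∀ a, Q ws a ≤ Q w a := fun a => by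
    have := hQws_le 0 a; rwa [hw0] at this
  -- singularity
  have hsing : FunSingular ws v := by
    intro u hu h1 h2
    have hQu0 : ∀ a, Q u a = 0 := by
      intro a
      have hub : ∀ n, Q u a ≤ 2 * (Q (wn n) a - Q (wn (n+1)) a) := by
        intro n
        have hlow : Q u a / 2 ≤ Q (wn n) a - Q (wn (n+1)) a := by
          rw [hinf n a]
          refine le_csInf (hSne n a) ?_
          rintro r ⟨b, c, hbc, rfl⟩
          have hb : Q u b ≤ Q (wn n) b := le_trans (le_trans (Q_mono h1 b) (hQws_le n b)) (le_refl _)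
          have hc : Q u c ≤ Q v c := Q_mono h2 c
          have hq : Q u a ≤ 2 * Q u b + 2 * Q u c := by
            rw [← hbc]; exact Q_two_add hu b c
          linarith
        linarith
      have h0 : Filter.Tendsto (fun n => 2 * (Q (wn n) a - Q (wn (n+1)) a))
          Filter.atTop (nhds 0) := by
        have h1' := hlQ a
        have h2' : Filter.Tendsto (fun n => Q (wn (n+1)) a) Filter.atTop (nhds (Q ws a)) :=
          h1'.comp (Filter.tendsto_add_atTop_nat 1)
        have := (h1'.sub h2').const_mul (2:ℝ)
        simpa using this
      have hle : Q u a ≤ 0 := ge_of_tendsto' h0 hub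
      have := Q_nonneg hu a
      linarith
    ext x
    have h := abs_apply_sq hu x
    rw [hQu0 1, hQu0 x] at h
    simp only [mul_zero] at h
    have habs : ‖u x‖ = 0 := by
      have := norm_nonneg (u x)
      nlinarith
    simpa using habs
  refine ⟨ws, hlapp, hwspos, hsing, hwws, ?_, ?_⟩
  · exact acPart v w ws wn hv hw0 hwws hposdiff hsub_pos hQws_le hQle_w hQsv hlQ
  · intro u hu hwu huac
    exact maxPart v w ws wn hv hw hw0 hinf hSbdd hSne hQnn hdnn hQmono hposdiff
      hQle_w hQsv hQws_le hQws_le_w hws_im hlQ u hu hwu huac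
end
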